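/- arXiv:2209.02373 — 14 statements merged into one kernel-verified Lean document; each statement's English description precedes it below -/
import Mathlib

section
/- Let $q_0, q_1$ be complex numbers with $|q_0| > 1$ and $|q_1| > 1$, and let $(i_k)_{k\ge1} \in \{0,1\}^\infty$. Define $\pi_{q_0,q_1}(i_1i_2\cdots) = \sum_{k=1}^\infty i_k/(q_{i_1}q_{i_2}\cdots q_{i_k})$. Then for any complex numbers $d_0, d_1$, we have $\sum_{k=1}^\infty d_{i_k}/(q_{i_1}q_{i_2}\cdots q_{i_k}) = \frac{d_0}{q_0-1} + \big(d_1 - d_0\frac{q_1-1}{q_0-1}\big)\, \pi_{q_0,q_1}(i_1i_2\cdots)$. -/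
noncomputable def piC (q0 q1 : ℂ) (i : ℕ → Bool) : ℂ :=
  ∑' k : ℕ, (cond (i k) 1 0 : ℂ) / ∏ j ∈ Finset.range (k + 1), (cond (i j) q1 q0)

/-!
The series is affine in the digit values: with `S = ∑ 1 / (q_{i_1} ⋯ q_{i_k})` and
`π = piC q0 q1 i`, it equals `d0 * S + (d1 - d0) * π`. Taking the digit values to be the bases
themselves, the series telescopes to `1 + S`, so `(q0 - 1) * S = 1 - (q1 - q0) * π`;
eliminating `S` gives the formula.
-/

open Finset

theorem tsum_self_div_prod_range_eq_one_add {K : Type*} [Field K] [TopologicalSpace K]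
    [IsTopologicalAddGroup K] [T2Space K] {q : ℕ → K} (hq : ∀ j, q j ≠ 0)
    (hs : Summable fun k => 1 / ∏ j ∈ range (k + 1), q j) :
    ∑' k, q k / ∏ j ∈ range (k + 1), q j = 1 + ∑' k, 1 / ∏ j ∈ range (k + 1), q j := by
  have hstep : ∀ k, q k / ∏ j ∈ range (k + 1), q j = 1 / ∏ j ∈ range k, q j := fun k => by
    rw [prod_range_succ, div_mul_cancel_right₀ (hq k), one_div]
  have hs' : Summable fun k => 1 / ∏ j ∈ range k, q j :=
    (summable_nat_add_iff (f := fun k => 1 / ∏ j ∈ range k, q j) 1).1 hs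
  rw [tsum_congr hstep, hs'.tsum_eq_zero_add]
  simp

section Digits

variable {𝕜 : Type*} [NormedField 𝕜] [CompleteSpace 𝕜]

theorem summable_div_prod_range {q c : ℕ → 𝕜} {m C : ℝ} (hm : 1 < m)
    (hq : ∀ j, m ≤ ‖q j‖) (hc : ∀ k, ‖c k‖ ≤ C) :
    Summable fun k => c k / ∏ j ∈ range (k + 1), q j := by
  have hm0 : 0 < m := one_pos.trans hm
  have hgeom : Summable fun k => C * m⁻¹ ^ (k + 1) :=
    ((summable_nat_add_iff 1).2
      (summable_geometric_of_lt_one (inv_nonneg.2 hm0.le) (inv_lt_one_of_one_lt₀ hm))).mul_left C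
  refine Summable.of_norm_bounded hgeom fun k => ?_
  have hprod : m ^ (k + 1) ≤ ∏ j ∈ range (k + 1), ‖q j‖ := by
    simpa using prod_le_prod (s := range (k + 1)) (fun _ _ => hm0.le) fun j _ => hq j
  calc ‖c k / ∏ j ∈ range (k + 1), q j‖ = ‖c k‖ / ∏ j ∈ range (k + 1), ‖q j‖ := by
        rw [norm_div, norm_prod]
    _ ≤ C / m ^ (k + 1) := div_le_div₀ ((norm_nonneg _).trans (hc 0)) (hc k) (by positivity) hprod
    _ = C * m⁻¹ ^ (k + 1) := by rw [inv_pow, div_eq_mul_inv]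

variable {q0 q1 : 𝕜}

theorem summable_cond_div_prod_range (h0 : 1 < ‖q0‖) (h1 : 1 < ‖q1‖) (i : ℕ → Bool)
    (d0 d1 : 𝕜) :
    Summable fun k => cond (i k) d1 d0 / ∏ j ∈ range (k + 1), cond (i j) q1 q0 :=
  summable_div_prod_range (lt_min h0 h1) (fun j => by cases i j <;> simp)
    (C := max ‖d0‖ ‖d1‖) fun k => by cases i k <;> simp

theorem tsum_cond_div_prod_range (h0 : 1 < ‖q0‖) (h1 : 1 < ‖q1‖) (i : ℕ → Bool)
    (d0 d1 : 𝕜) :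
    ∑' k, cond (i k) d1 d0 / ∏ j ∈ range (k + 1), cond (i j) q1 q0 =
      d0 * ∑' k, 1 / ∏ j ∈ range (k + 1), cond (i j) q1 q0 +
        (d1 - d0) * ∑' k, cond (i k) 1 0 / ∏ j ∈ range (k + 1), cond (i j) q1 q0 := by
  have hsplit : ∀ k, cond (i k) d1 d0 / ∏ j ∈ range (k + 1), cond (i j) q1 q0 =
      d0 * (1 / ∏ j ∈ range (k + 1), cond (i j) q1 q0) +
        (d1 - d0) * (cond (i k) 1 0 / ∏ j ∈ range (k + 1), cond (i j) q1 q0) := fun k => by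
    cases i k <;> simp only [cond_false, cond_true] <;> ring
  have hone : Summable fun k => 1 / ∏ j ∈ range (k + 1), cond (i j) q1 q0 := by
    simpa only [Bool.cond_self] using summable_cond_div_prod_range h0 h1 i (1 : 𝕜) 1
  rw [tsum_congr hsplit, Summable.tsum_add (hone.mul_left d0)
    ((summable_cond_div_prod_range h0 h1 i 0 1).mul_left (d1 - d0)), tsum_mul_left, tsum_mul_left]

end Digits

theorem stmt0 (q0 q1 d0 d1 : ℂ) (h0 : 1 < ‖q0‖) (h1 : 1 < ‖q1‖)
    (i : ℕ → Bool) :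
    (∑' k : ℕ, (cond (i k) d1 d0) / ∏ j ∈ Finset.range (k + 1), (cond (i j) q1 q0)) =
      d0 / (q0 - 1) + (d1 - d0 * (q1 - 1) / (q0 - 1)) * piC q0 q1 i := by
  have hq : ∀ j, cond (i j) q1 q0 ≠ 0 := fun j => by
    cases i j
    exacts [norm_pos_iff.1 (one_pos.trans h0), norm_pos_iff.1 (one_pos.trans h1)]
  have hq0 : q0 - 1 ≠ 0 := sub_ne_zero.2 fun h => by simp [h] at h0
  have htel := tsum_self_div_prod_range_eq_one_add hq
    (by simpa only [Bool.cond_self] using summable_cond_div_prod_range h0 h1 i (1 : ℂ) 1)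
  rw [tsum_cond_div_prod_range h0 h1 i] at htel
  rw [tsum_cond_div_prod_range h0 h1 i, piC]
  field_simp
  linear_combination d0 * htel
end

section
/- Let $q_0, q_1$ be complex numbers with $|q_0| > 1$ and $|q_1| > 1$, and let $(i_k)_{k\ge1} \in \{0,1\}^\infty$. With $\pi_{q_0,q_1}(i_1i_2\cdots) = \sum_{k=1}^\infty i_k/(q_{i_1}q_{i_2}\cdots q_{i_k})$, we have $(q_1-1)\,\pi_{q_0,q_1}(i_1i_2\cdots) + (q_0-1)\,\pi_{q_1,q_0}((1-i_1)(1-i_2)\cdots) = 1$. -/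
open Finset

section InverseProducts

variable {𝕜 : Type*} [NormedField 𝕜] {c : ℕ → 𝕜} {m : ℝ}

lemma norm_inv_prod_range_le (hm : 0 < m) (hc : ∀ j, m ≤ ‖c j‖) (k : ℕ) :
    ‖(∏ j ∈ range k, c j)⁻¹‖ ≤ m⁻¹ ^ k := by
  rw [norm_inv, norm_prod, inv_pow]
  apply inv_anti₀ (by positivity)
  simpa using prod_le_prod (s := range k) (fun _ _ => hm.le) (fun j _ => hc j)

variable [CompleteSpace 𝕜]

lemma summable_inv_prod_range (hm : 1 < m) (hc : ∀ j, m ≤ ‖c j‖) :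
    Summable fun k => (∏ j ∈ range k, c j)⁻¹ :=
  .of_norm_bounded (summable_geometric_of_lt_one (by positivity) (inv_lt_one_of_one_lt₀ hm))
    (norm_inv_prod_range_le (by positivity) hc)

lemma hasSum_sub_one_div_prod_range (hm : 1 < m) (hc : ∀ j, m ≤ ‖c j‖) :
    HasSum (fun k => (c k - 1) / ∏ j ∈ range (k + 1), c j) 1 := by
  set g : ℕ → 𝕜 := fun k => (∏ j ∈ range k, c j)⁻¹
  have hg : Summable g := summable_inv_prod_range hm hc
  have hc0 : ∀ j, c j ≠ 0 := fun j => norm_pos_iff.mp (by linarith [hc j])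
  have htelescope : ∀ k, (c k - 1) / ∏ j ∈ range (k + 1), c j = g k - g (k + 1) := by
    intro k
    simp only [g, prod_range_succ]
    field_simp [hc0 k]
  have hsub := hg.hasSum.sub ((summable_nat_add_iff 1).mpr hg).hasSum
  rw [hg.tsum_eq_zero_add, add_sub_cancel_right] at hsub
  simpa [htelescope, g] using hsub

end InverseProducts

lemma summable_piC_terms {q0 q1 : ℂ} (h0 : 1 < ‖q0‖) (h1 : 1 < ‖q1‖) (i : ℕ → Bool) :
    Summable fun k => (cond (i k) 1 0 : ℂ) / ∏ j ∈ range (k + 1), cond (i j) q1 q0 := by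
  have hg := (summable_nat_add_iff 1).mpr <| summable_inv_prod_range
    (c := fun j => cond (i j) q1 q0) (lt_min h0 h1) (fun j => by cases i j <;> simp)
  refine hg.norm.of_norm_bounded fun k => ?_
  cases i k <;> simp [div_eq_mul_inv, prod_nonneg]

theorem stmt1 (q0 q1 : ℂ) (h0 : 1 < ‖q0‖) (h1 : 1 < ‖q1‖)
    (i : ℕ → Bool) :
    (q1 - 1) * piC q0 q1 i + (q0 - 1) * piC q1 q0 (fun k => !(i k)) = 1 := by
  have hsum := hasSum_sub_one_div_prod_range (c := fun j => cond (i j) q1 q0)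
    (lt_min h0 h1) (fun j => by cases i j <;> simp)
  unfold piC
  rw [← tsum_mul_left, ← tsum_mul_left, ← ((summable_piC_terms h0 h1 i).mul_left _).tsum_add
    ((summable_piC_terms h1 h0 _).mul_left _)]
  refine (tsum_congr fun k => ?_).trans hsum.tsum_eq
  simp only [Bool.cond_not]
  cases i k <;> simp [div_eq_mul_inv]
end

section
/- For real numbers $q_0, q_1 > 1$ with $q_0 + q_1 < q_0 q_1$, every binary sequence is a unique $(q_0,q_1)$-expansion, i.e., $U_{q_0,q_1} = \{0,1\}^\infty$; equivalently, the map $\pi_{q_0,q_1}: \{0,1\}^\infty \to \mathbb{R}$ is injective. -/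
noncomputable def piR (q0 q1 : ℝ) (i : ℕ → Bool) : ℝ :=
  ∑' k : ℕ, (cond (i k) 1 0 : ℝ) / ∏ j ∈ Finset.range (k + 1), (cond (i j) q1 q0)

section aux

variable {q0 q1 : ℝ}

lemma one_lt_cond (h0 : 1 < q0) (h1 : 1 < q1) (b : Bool) : 1 < cond b q1 q0 := by
  cases b <;> simpa

lemma prod_pos' (h0 : 1 < q0) (h1 : 1 < q1) (i : ℕ → Bool) (n : ℕ) :
    0 < ∏ j ∈ Finset.range n, (cond (i j) q1 q0) :=
  Finset.prod_pos fun j _ => lt_trans one_pos (one_lt_cond h0 h1 _)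

lemma term_nonneg (h0 : 1 < q0) (h1 : 1 < q1) (i : ℕ → Bool) (k : ℕ) :
    0 ≤ (cond (i k) 1 0 : ℝ) / ∏ j ∈ Finset.range (k + 1), (cond (i j) q1 q0) :=
  div_nonneg (by cases i k <;> norm_num) (prod_pos' h0 h1 i _).le

lemma term_le (h0 : 1 < q0) (h1 : 1 < q1) (i : ℕ → Bool) (k : ℕ) :
    (cond (i k) 1 0 : ℝ) / ∏ j ∈ Finset.range (k + 1), (cond (i j) q1 q0)
      ≤ (min q0 q1)⁻¹ ^ (k + 1) := by
  have hm : 0 < min q0 q1 := lt_min (lt_trans one_pos h0) (lt_trans one_pos h1)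
  have hprod : (min q0 q1) ^ (k + 1) ≤ ∏ j ∈ Finset.range (k + 1), (cond (i j) q1 q0) := by
    calc (min q0 q1) ^ (k + 1) = ∏ _j ∈ Finset.range (k + 1), (min q0 q1) := by
          simp
      _ ≤ _ := Finset.prod_le_prod (fun j _ => hm.le)
          (fun j _ => by cases i j <;> simp [min_le_left, min_le_right])
  calc (cond (i k) 1 0 : ℝ) / ∏ j ∈ Finset.range (k + 1), (cond (i j) q1 q0)
      ≤ 1 / ∏ j ∈ Finset.range (k + 1), (cond (i j) q1 q0) := by
        gcongr
        · exact (prod_pos' h0 h1 i _).le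
        · cases i k <;> norm_num
    _ ≤ 1 / (min q0 q1) ^ (k + 1) := by
        apply one_div_le_one_div_of_le (pow_pos hm _) hprod
    _ = (min q0 q1)⁻¹ ^ (k + 1) := by rw [one_div, inv_pow]

lemma summable_geo (h0 : 1 < q0) (h1 : 1 < q1) :
    Summable (fun k : ℕ => (min q0 q1)⁻¹ ^ (k + 1)) := by
  have hm : 1 < min q0 q1 := lt_min h0 h1
  have : Summable (fun k : ℕ => (min q0 q1)⁻¹ ^ k) :=
    summable_geometric_of_lt_one (by positivity)
      (inv_lt_one_of_one_lt₀ hm)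
  simpa [pow_succ, mul_comm] using this.mul_left (min q0 q1)⁻¹

lemma summable_term (h0 : 1 < q0) (h1 : 1 < q1) (i : ℕ → Bool) :
    Summable (fun k : ℕ =>
      (cond (i k) 1 0 : ℝ) / ∏ j ∈ Finset.range (k + 1), (cond (i j) q1 q0)) :=
  Summable.of_nonneg_of_le (term_nonneg h0 h1 i) (term_le h0 h1 i) (summable_geo h0 h1)

lemma piR_rec (h0 : 1 < q0) (h1 : 1 < q1) (i : ℕ → Bool) :
    piR q0 q1 i
      = ((cond (i 0) 1 0 : ℝ) + piR q0 q1 (fun n => i (n + 1))) / cond (i 0) q1 q0 := by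
  have hq : (0:ℝ) < cond (i 0) q1 q0 := lt_trans one_pos (one_lt_cond h0 h1 _)
  unfold piR
  rw [Summable.tsum_eq_zero_add (summable_term h0 h1 i)]
  have hterm : ∀ k : ℕ,
      (cond (i (k + 1)) 1 0 : ℝ) / ∏ j ∈ Finset.range (k + 1 + 1), (cond (i j) q1 q0)
        = ((cond (i (k + 1)) 1 0 : ℝ)
            / ∏ j ∈ Finset.range (k + 1), (cond (i (j + 1)) q1 q0)) / cond (i 0) q1 q0 := by
    intro k
    rw [Finset.prod_range_succ' (fun j => (cond (i j) q1 q0)) (k + 1), div_div]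
  simp only [hterm]
  rw [tsum_div_const, add_div]
  simp
lemma piR_nonneg (h0 : 1 < q0) (h1 : 1 < q1) (i : ℕ → Bool) : 0 ≤ piR q0 q1 i :=
  tsum_nonneg (term_nonneg h0 h1 i)

lemma piR_bdd (h0 : 1 < q0) (h1 : 1 < q1) : BddAbove (Set.range (piR q0 q1)) := by
  refine ⟨∑' k : ℕ, (min q0 q1)⁻¹ ^ (k + 1), ?_⟩
  rintro x ⟨i, rfl⟩
  exact Summable.tsum_le_tsum (term_le h0 h1 i) (summable_term h0 h1 i) (summable_geo h0 h1)

lemma piR_le_iSup (h0 : 1 < q0) (h1 : 1 < q1) (i : ℕ → Bool) :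
    piR q0 q1 i ≤ ⨆ j : ℕ → Bool, piR q0 q1 j :=
  le_ciSup (piR_bdd h0 h1) i

lemma iSup_piR_pos (h0 : 1 < q0) (h1 : 1 < q1) :
    0 < ⨆ j : ℕ → Bool, piR q0 q1 j := by
  have h : (1 : ℝ) / q1 ≤ piR q0 q1 (fun _ => true) := by
    unfold piR
    have := Summable.le_tsum (summable_term h0 h1 (fun _ => true)) 0
      (fun k _ => term_nonneg h0 h1 (fun _ => true) k)
    simpa using this
  have h2 : (0:ℝ) < 1 / q1 := by positivity
  exact lt_of_lt_of_le (lt_of_lt_of_le h2 h) (piR_le_iSup h0 h1 _)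

lemma iSup_piR_le (h0 : 1 < q0) (h1 : 1 < q1) :
    (⨆ j : ℕ → Bool, piR q0 q1 j) ≤ 1 / (q1 - 1) := by
  set S := ⨆ j : ℕ → Bool, piR q0 q1 j with hS
  have hS0 : 0 < S := iSup_piR_pos h0 h1
  have hmax : S ≤ max (S / q0) ((1 + S) / q1) := by
    refine ciSup_le fun i => ?_
    rw [piR_rec h0 h1 i]
    cases hi : i 0 with
    | false =>
      refine le_trans ?_ (le_max_left _ _)
      simp only [hi, cond_false, cond]
      have h := piR_le_iSup h0 h1 (fun n => i (n + 1))
      have hq0 : (0:ℝ) < q0 := lt_trans one_pos h0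
      rw [zero_add]
      gcongr
    | true =>
      refine le_trans ?_ (le_max_right _ _)
      simp only [hi, cond_true, cond]
      have h := piR_le_iSup h0 h1 (fun n => i (n + 1))
      have hq1 : (0:ℝ) < q1 := lt_trans one_pos h1
      gcongr
  have hq0 : (0:ℝ) < q0 := lt_trans one_pos h0
  have hq1 : (0:ℝ) < q1 := lt_trans one_pos h1
  rcases le_max_iff.mp hmax with hc | hc
  · exfalso
    rw [le_div_iff₀ hq0] at hc
    nlinarith
  · rw [le_div_iff₀ hq1] at hc
    rw [le_div_iff₀ (by linarith : (0:ℝ) < q1 - 1)]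
    linarith

lemma piR_lt (h0 : 1 < q0) (h1 : 1 < q1) (h : q0 + q1 < q0 * q1)
    (i i' : ℕ → Bool) (hi : i 0 = false) (hi' : i' 0 = true) :
    piR q0 q1 i < piR q0 q1 i' := by
  have hq0 : (0:ℝ) < q0 := lt_trans one_pos h0
  have hq1 : (0:ℝ) < q1 := lt_trans one_pos h1
  have h1' : (0:ℝ) < q1 - 1 := by linarith
  have hle : piR q0 q1 i ≤ (1 / (q1 - 1)) / q0 := by
    rw [piR_rec h0 h1 i, hi]
    simp only [cond]
    rw [zero_add]
    have := (piR_le_iSup h0 h1 (fun n => i (n + 1))).trans (iSup_piR_le h0 h1)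
    gcongr
  have hge : 1 / q1 ≤ piR q0 q1 i' := by
    rw [piR_rec h0 h1 i', hi']
    simp only [cond]
    gcongr
    linarith [piR_nonneg h0 h1 (fun n => i' (n + 1))]
  have hlt : (1 / (q1 - 1)) / q0 < 1 / q1 := by
    rw [div_div, div_lt_div_iff₀ (by positivity) hq1]
    nlinarith
  linarith

lemma digit_eq (h0 : 1 < q0) (h1 : 1 < q1) (h : q0 + q1 < q0 * q1)
    (i i' : ℕ → Bool) (heq : piR q0 q1 i = piR q0 q1 i') : i 0 = i' 0 := by
  cases hi : i 0 <;> cases hi' : i' 0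
  · rfl
  · exact absurd heq (piR_lt h0 h1 h i i' hi hi').ne
  · exact absurd heq.symm (piR_lt h0 h1 h i' i hi' hi).ne
  · rfl

lemma tail_eq (h0 : 1 < q0) (h1 : 1 < q1)
    (i i' : ℕ → Bool) (heq : piR q0 q1 i = piR q0 q1 i') (hd : i 0 = i' 0) :
    piR q0 q1 (fun n => i (n + 1)) = piR q0 q1 (fun n => i' (n + 1)) := by
  rw [piR_rec h0 h1 i, piR_rec h0 h1 i', ← hd] at heq
  have hq : (0:ℝ) < cond (i 0) q1 q0 := lt_trans one_pos (one_lt_cond h0 h1 _)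
  field_simp at heq
  linarith

end aux

/-- If `q0 + q1 < q0 * q1`, every binary sequence is a unique `(q0,q1)`-expansion,
i.e. `π_{q0,q1}` is injective on binary sequences. -/
theorem stmt3 (q0 q1 : ℝ) (h0 : 1 < q0) (h1 : 1 < q1) (h : q0 + q1 < q0 * q1) :
    Function.Injective (piR q0 q1) := by
  suffices H : ∀ n (i i' : ℕ → Bool), piR q0 q1 i = piR q0 q1 i' → i n = i' n by
    intro i i' heq
    funext n
    exact H n i i' heq
  intro n
  induction n with
  | zero => exact fun i i' heq => digit_eq h0 h1 h i i' heq
  | succ n ih =>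
    intro i i' heq
    have hd := digit_eq h0 h1 h i i' heq
    exact ih _ _ (tail_eq h0 h1 i i' heq hd)
end

section
/- Let $\mathbf{a}, \mathbf{b} \in \{0,1\}^\infty$. Define $\Sigma_{\mathbf{a},\mathbf{b}}$ as the set of sequences $i_1 i_2 \cdots \in \{0,1\}^\infty$ such that $\mathbf{a} \le i_n i_{n+1} \cdots \le \mathbf{b}$ (lexicographically) for all $n \ge 1$, and define $\Omega_{0\mathbf{b}, 1\mathbf{a}}$ as the set of sequences $i_1i_2\cdots$ such that for all $n \ge 1$, either $i_n i_{n+1}\cdots \le 0\mathbf{b}$ or $i_n i_{n+1}\cdots \ge 1\mathbf{a}$. Then $\Omega_{0\mathbf{b},1\mathbf{a}} = \{0^k \mathbf{u} : k \ge 0, \mathbf{u} \in \Sigma_{\mathbf{a},\mathbf{b}}\} \cup \{1^k \mathbf{u} : k \ge 0, \mathbf{u} \in \Sigma_{\mathbf{a},\mathbf{b}}\} \cup \{\overline{0}, \overline{1}\}$. -/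
def lexLe (u v : ℕ → Bool) : Prop :=
  u = v ∨ ∃ n, (∀ k < n, u k = v k) ∧ u n < v n

def lexLt (u v : ℕ → Bool) : Prop :=
  ∃ n, (∀ k < n, u k = v k) ∧ u n < v n

def shiftSeq (n : ℕ) (u : ℕ → Bool) : ℕ → Bool := fun k => u (n + k)

def consSeq (d : Bool) (u : ℕ → Bool) : ℕ → Bool :=
  fun k => match k with
  | 0 => d
  | k + 1 => u k

def prependSeq (m : ℕ) (d : Bool) (u : ℕ → Bool) : ℕ → Bool :=
  fun n => if n < m then d else u (n - m)

/-- The subshift of orbits staying in the lexicographic interval `[a, b]`. -/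
def SigmaSet (a b : ℕ → Bool) : Set (ℕ → Bool) :=
  {i | ∀ n, lexLe a (shiftSeq n i) ∧ lexLe (shiftSeq n i) b}

/-- The subshift of orbits avoiding the open lexicographic interval `(a, b)`. -/
def OmegaSet (a b : ℕ → Bool) : Set (ℕ → Bool) :=
  {i | ∀ n, lexLe (shiftSeq n i) a ∨ lexLe b (shiftSeq n i)}

lemma lexLt_iff (u v : ℕ → Bool) : lexLt u v ↔ toLex u < toLex v := Iff.rfl

lemma lexLe_iff (u v : ℕ → Bool) : lexLe u v ↔ toLex u ≤ toLex v := by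
  rw [le_iff_lt_or_eq]
  constructor
  · rintro (h | h)
    · exact Or.inr (congrArg toLex h)
    · exact Or.inl h
  · rintro (h | h)
    · exact Or.inr h
    · exact Or.inl (congrArg ofLex h)

lemma lexLe_trans {u v w : ℕ → Bool} (h1 : lexLe u v) (h2 : lexLe v w) : lexLe u w := by
  rw [lexLe_iff] at *
  exact le_trans h1 h2

lemma lexLe_refl (u : ℕ → Bool) : lexLe u u := Or.inl rfl

lemma shift_zero (i : ℕ → Bool) : shiftSeq 0 i = i := by
  funext k; simp [shiftSeq]

lemma shift_shift (m k : ℕ) (i : ℕ → Bool) : shiftSeq m (shiftSeq k i) = shiftSeq (k + m) i := by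
  funext n; simp [shiftSeq, Nat.add_assoc]

lemma shift_cons (n : ℕ) (i : ℕ → Bool) :
    shiftSeq n i = consSeq (i n) (shiftSeq (n + 1) i) := by
  funext k
  cases k with
  | zero => simp [shiftSeq, consSeq]
  | succ m => show i (n + (m + 1)) = i (n + 1 + m); congr 1; omega

lemma prepend_zero (d : Bool) (u : ℕ → Bool) : prependSeq 0 d u = u := by
  funext n; simp [prependSeq]

lemma prepend_succ (k : ℕ) (d : Bool) (u : ℕ → Bool) :
    prependSeq (k + 1) d u = consSeq d (prependSeq k d u) := by
  funext n
  cases n with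
  | zero => simp [prependSeq, consSeq]
  | succ m =>
    show (if m + 1 < k + 1 then d else u (m + 1 - (k + 1))) = if m < k then d else u (m - k)
    by_cases h : m < k
    · simp [h, Nat.succ_lt_succ h]
    · have h2 : ¬ m + 1 < k + 1 := by omega
      simp [h, h2]

lemma shift_prepend_le {n k : ℕ} (h : n ≤ k) (d : Bool) (u : ℕ → Bool) :
    shiftSeq n (prependSeq k d u) = prependSeq (k - n) d u := by
  funext m
  show (if n + m < k then d else u (n + m - k)) = if m < k - n then d else u (m - (k - n))
  by_cases hm : n + m < k
  · simp [hm, show m < k - n by omega]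
  · have h1 : ¬ m < k - n := by omega
    simp [hm, h1]
    congr 1
    omega

lemma shift_prepend_ge {n k : ℕ} (h : k ≤ n) (d : Bool) (u : ℕ → Bool) :
    shiftSeq n (prependSeq k d u) = shiftSeq (n - k) u := by
  funext m
  show (if n + m < k then d else u (n + m - k)) = u (n - k + m)
  have h1 : ¬ n + m < k := by omega
  simp [h1]
  congr 1
  omega

lemma cons_le_cons_iff (d : Bool) (x y : ℕ → Bool) :
    lexLe (consSeq d x) (consSeq d y) ↔ lexLe x y := by
  constructor
  · rintro (h | ⟨n, hag, hlt⟩)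
    · exact Or.inl (funext fun n => congrFun h (n + 1))
    · cases n with
      | zero => exact absurd hlt (lt_irrefl d)
      | succ m => exact Or.inr ⟨m, fun j hj => hag (j + 1) (by omega), hlt⟩
  · rintro (h | ⟨n, hag, hlt⟩)
    · exact Or.inl (congrArg (consSeq d) h)
    · refine Or.inr ⟨n + 1, fun j hj => ?_, hlt⟩
      cases j with
      | zero => rfl
      | succ m => exact hag m (by omega)

lemma cons_lt (x y : ℕ → Bool) : lexLt (consSeq false x) (consSeq true y) :=
  ⟨0, fun j hj => by omega, by simp [consSeq]⟩

lemma not_cons_le (x y : ℕ → Bool) : ¬ lexLe (consSeq true x) (consSeq false y) := by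
  intro h
  rw [lexLe_iff] at h
  exact absurd h ((lexLt_iff _ _).mp (cons_lt y x)).not_ge

lemma bot_le' (x : ℕ → Bool) : lexLe (fun _ => false) x := by
  by_cases h : ∀ n, x n = false
  · exact Or.inl (funext fun n => (h n).symm)
  · push_neg at h
    have h' : ∃ n, x n = true := by
      obtain ⟨n, hn⟩ := h
      exact ⟨n, by simpa using hn⟩
    obtain ⟨n, hxn, hmin⟩ : ∃ n, x n = true ∧ ∀ k < n, x k = false :=
      ⟨Nat.find h', Nat.find_spec h', fun k hk => by simpa using Nat.find_min h' hk⟩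
    refine Or.inr ⟨n, fun k hk => (hmin k hk).symm, ?_⟩
    show false < x n
    rw [hxn]
    exact Bool.false_lt_true

lemma le_top' (x : ℕ → Bool) : lexLe x (fun _ => true) := by
  by_cases h : ∀ n, x n = true
  · exact Or.inl (funext fun n => h n)
  · push_neg at h
    have h' : ∃ n, x n = false := by
      obtain ⟨n, hn⟩ := h
      exact ⟨n, by simpa using hn⟩
    obtain ⟨n, hxn, hmin⟩ : ∃ n, x n = false ∧ ∀ k < n, x k = true :=
      ⟨Nat.find h', Nat.find_spec h', fun k hk => by simpa using Nat.find_min h' hk⟩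
    refine Or.inr ⟨n, fun k hk => hmin k hk, ?_⟩
    show x n < true
    rw [hxn]
    exact Bool.false_lt_true

lemma cons_false_le (x : ℕ → Bool) : lexLe (consSeq false x) x := by
  by_cases h : ∀ n, x n = false
  · refine Or.inl (funext fun n => ?_)
    cases n with
    | zero => exact (h 0).symm
    | succ m => rw [show consSeq false x (m+1) = x m from rfl, h m, h (m+1)]
  · push_neg at h
    have h' : ∃ n, x n = true := by
      obtain ⟨n, hn⟩ := h
      exact ⟨n, by simpa using hn⟩
    obtain ⟨n, hxn, hmin⟩ : ∃ n, x n = true ∧ ∀ k < n, x k = false :=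
      ⟨Nat.find h', Nat.find_spec h', fun k hk => by simpa using Nat.find_min h' hk⟩
    refine Or.inr ⟨n, fun k hk => ?_, ?_⟩
    · cases k with
      | zero => rw [show consSeq false x 0 = false from rfl, hmin 0 hk]
      | succ m =>
        rw [show consSeq false x (m+1) = x m from rfl, hmin m (by omega), hmin (m+1) hk]
    · rw [hxn]
      cases n with
      | zero => exact Bool.false_lt_true
      | succ m =>
        rw [show consSeq false x (m+1) = x m from rfl, hmin m (by omega)]
        exact Bool.false_lt_true

lemma le_cons_true (x : ℕ → Bool) : lexLe x (consSeq true x) := by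
  by_cases h : ∀ n, x n = true
  · refine Or.inl (funext fun n => ?_)
    cases n with
    | zero => exact h 0
    | succ m => rw [show consSeq true x (m+1) = x m from rfl, h m, h (m+1)]
  · push_neg at h
    have h' : ∃ n, x n = false := by
      obtain ⟨n, hn⟩ := h
      exact ⟨n, by simpa using hn⟩
    obtain ⟨n, hxn, hmin⟩ : ∃ n, x n = false ∧ ∀ k < n, x k = true :=
      ⟨Nat.find h', Nat.find_spec h', fun k hk => by simpa using Nat.find_min h' hk⟩
    refine Or.inr ⟨n, fun k hk => ?_, ?_⟩
    · cases k with
      | zero => rw [show consSeq true x 0 = true from rfl, hmin 0 hk]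
      | succ m =>
        rw [show consSeq true x (m+1) = x m from rfl, hmin m (by omega), hmin (m+1) hk]
    · rw [hxn]
      cases n with
      | zero => exact Bool.false_lt_true
      | succ m =>
        rw [show consSeq true x (m+1) = x m from rfl, hmin m (by omega)]
        exact Bool.false_lt_true

lemma prepend_false_le (k : ℕ) (u : ℕ → Bool) : lexLe (prependSeq k false u) u := by
  induction k with
  | zero => rw [prepend_zero]; exact lexLe_refl u
  | succ m ih =>
    rw [prepend_succ]
    exact lexLe_trans (cons_false_le _) ih

lemma le_prepend_true (k : ℕ) (u : ℕ → Bool) : lexLe u (prependSeq k true u) := by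
  induction k with
  | zero => rw [prepend_zero]; exact lexLe_refl u
  | succ m ih =>
    rw [prepend_succ]
    exact lexLe_trans ih (le_cons_true _)

lemma od {a b i : ℕ → Bool} (h : i ∈ OmegaSet (consSeq false b) (consSeq true a)) (n : ℕ) :
    (i n = false ∧ lexLe (shiftSeq (n + 1) i) b) ∨
    (i n = true ∧ lexLe a (shiftSeq (n + 1) i)) := by
  rcases h n with h1 | h1 <;> rw [shift_cons n i] at h1
  · cases hd : i n
    · rw [hd] at h1
      exact Or.inl ⟨rfl, (cons_le_cons_iff _ _ _).mp h1⟩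
    · rw [hd] at h1
      exact absurd h1 (not_cons_le _ _)
  · cases hd : i n
    · rw [hd] at h1
      exact absurd h1 (not_cons_le _ _)
    · rw [hd] at h1
      exact Or.inr ⟨rfl, (cons_le_cons_iff _ _ _).mp h1⟩

lemma subU {a b i : ℕ → Bool} (h : i ∈ OmegaSet (consSeq false b) (consSeq true a)) :
    ∀ p q, q < p → i q = false → lexLe (shiftSeq p i) b := by
  intro p
  induction p with
  | zero => intro q hq _; omega
  | succ p ih =>
    intro q hq hqf
    rcases od h p with ⟨hp, hb⟩ | ⟨hp, _⟩
    · exact hb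
    · have hq' : q < p := by
        rcases Nat.lt_succ_iff_lt_or_eq.mp hq with h' | rfl
        · exact h'
        · rw [hqf] at hp; exact absurd hp (by simp)
      have h1 : lexLe (shiftSeq (p + 1) i) (shiftSeq p i) := by
        rw [shift_cons p i, hp]
        exact le_cons_true _
      exact lexLe_trans h1 (ih q hq' hqf)

lemma subL {a b i : ℕ → Bool} (h : i ∈ OmegaSet (consSeq false b) (consSeq true a)) :
    ∀ p q, q < p → i q = true → lexLe a (shiftSeq p i) := by
  intro p
  induction p with
  | zero => intro q hq _; omega
  | succ p ih =>
    intro q hq hqt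
    rcases od h p with ⟨hp, _⟩ | ⟨hp, ha⟩
    · have hq' : q < p := by
        rcases Nat.lt_succ_iff_lt_or_eq.mp hq with h' | rfl
        · exact h'
        · rw [hqt] at hp; exact absurd hp (by simp)
      have h1 : lexLe (shiftSeq p i) (shiftSeq (p + 1) i) := by
        rw [shift_cons p i, hp]
        exact cons_false_le _
      exact lexLe_trans (ih q hq' hqt) h1
    · exact ha

theorem stmt4 (a b : ℕ → Bool) :
    OmegaSet (consSeq false b) (consSeq true a) =
      {i | ∃ k u, u ∈ SigmaSet a b ∧ i = prependSeq k false u} ∪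
      {i | ∃ k u, u ∈ SigmaSet a b ∧ i = prependSeq k true u} ∪
      {fun _ => false, fun _ => true} := by
  ext i
  simp only [Set.mem_union, Set.mem_setOf_eq, Set.mem_insert_iff, Set.mem_singleton_iff]
  constructor
  · intro h
    by_cases hc : ∀ n, i n = i 0
    · cases hi0 : i 0
      · exact Or.inr (Or.inl (funext fun n => by rw [hc n, hi0]))
      · exact Or.inr (Or.inr (funext fun n => by rw [hc n, hi0]))
    · push_neg at hc
      have hk1 : 0 < Nat.find hc := by
        rcases Nat.eq_zero_or_pos (Nat.find hc) with h' | h'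
        · have := Nat.find_spec hc
          rw [h'] at this
          exact absurd rfl this
        · exact h'
      set k := Nat.find hc with hkdef
      have hmin : ∀ j < k, i j = i 0 := fun j hj => by
        have := Nat.find_min hc hj
        simpa using this
      have hk : i k ≠ i 0 := Nat.find_spec hc
      cases hi0 : i 0
      · -- initial run of falses, then a true at k
        have hkt : i k = true := by
          rw [hi0] at hk
          simpa using hk
        refine Or.inl (Or.inl ⟨k, shiftSeq k i, fun m => ?_, ?_⟩)
        · rw [shift_shift]
          constructor
          · -- a ≤ shift (k+m) i
            cases m with
            | zero =>
              rw [Nat.add_zero]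
              rcases od h k with ⟨hp, _⟩ | ⟨_, ha⟩
              · rw [hkt] at hp; exact absurd hp (by simp)
              · have h1 : lexLe (shiftSeq (k + 1) i) (shiftSeq k i) := by
                  rw [shift_cons k i, hkt]
                  exact le_cons_true _
                exact lexLe_trans ha h1
            | succ m => exact subL h (k + (m + 1)) k (by omega) hkt
          · exact subU h (k + m) 0 (by omega) hi0
        · funext n
          by_cases hn : n < k
          · simp only [prependSeq, hn, if_true]
            rw [hmin n hn, hi0]
          · simp only [prependSeq, hn, if_false]
            show i n = i (k + (n - k))
            congr 1
            omega
      · -- initial run of trues, then a false at k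
        have hkf : i k = false := by
          rw [hi0] at hk
          simpa using hk
        refine Or.inl (Or.inr ⟨k, shiftSeq k i, fun m => ?_, ?_⟩)
        · rw [shift_shift]
          constructor
          · exact subL h (k + m) 0 (by omega) hi0
          · cases m with
            | zero =>
              rw [Nat.add_zero]
              rcases od h k with ⟨_, hb⟩ | ⟨hp, _⟩
              · have h1 : lexLe (shiftSeq k i) (shiftSeq (k + 1) i) := by
                  rw [shift_cons k i, hkf]
                  exact cons_false_le _
                exact lexLe_trans h1 hb
              · rw [hkf] at hp; exact absurd hp (by simp)
            | succ m => exact subU h (k + (m + 1)) k (by omega) hkf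
        · funext n
          by_cases hn : n < k
          · simp only [prependSeq, hn, if_true]
            rw [hmin n hn, hi0]
          · simp only [prependSeq, hn, if_false]
            show i n = i (k + (n - k))
            congr 1
            omega
  · rintro ((⟨k, u, hu, rfl⟩ | ⟨k, u, hu, rfl⟩) | (rfl | rfl))
    · -- 0^k u
      have hub : lexLe u b := by have := (hu 0).2; rwa [shift_zero] at this
      intro n
      by_cases hn : n < k
      · left
        rw [shift_prepend_le (by omega : n ≤ k), show k - n = (k - n - 1) + 1 by omega,
          prepend_succ]
        exact (cons_le_cons_iff _ _ _).mpr (lexLe_trans (prepend_false_le _ _) hub)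
      · rw [shift_prepend_ge (by omega : k ≤ n), shift_cons (n - k) u]
        cases hd : u (n - k)
        · left
          exact (cons_le_cons_iff _ _ _).mpr (hu (n - k + 1)).2
        · right
          exact (cons_le_cons_iff _ _ _).mpr (hu (n - k + 1)).1
    · -- 1^k u
      have hau : lexLe a u := by have := (hu 0).1; rwa [shift_zero] at this
      intro n
      by_cases hn : n < k
      · right
        rw [shift_prepend_le (by omega : n ≤ k), show k - n = (k - n - 1) + 1 by omega,
          prepend_succ]
        exact (cons_le_cons_iff _ _ _).mpr (lexLe_trans hau (le_prepend_true _ _))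
      · rw [shift_prepend_ge (by omega : k ≤ n), shift_cons (n - k) u]
        cases hd : u (n - k)
        · left
          exact (cons_le_cons_iff _ _ _).mpr (hu (n - k + 1)).2
        · right
          exact (cons_le_cons_iff _ _ _).mpr (hu (n - k + 1)).1
    · intro n
      left
      have h1 : shiftSeq n (fun _ => false) = fun _ => false := rfl
      rw [h1]
      exact bot_le' _
    · intro n
      right
      have h1 : shiftSeq n (fun _ => true) = fun _ => true := rfl
      rw [h1]
      exact le_top' _
end

section
/- Let $\mathbf{a}, \mathbf{b} \in \{0,1\}^\infty$ and let $\mathbf{u} = i_1i_2\cdots$ be a binary sequence starting with $01$ (i.e., $i_1 = 0$, $i_2 = 1$) such that for all $n \ge 1$, either $i_ni_{n+1}\cdots \le 0\mathbf{b}$ or $i_ni_{n+1}\cdots \ge 1\mathbf{a}$ lexicographically. Then the shifted sequence $i_2i_3\cdots$ satisfies $\mathbf{a} \le i_ni_{n+1}\cdots \le \mathbf{b}$ for all $n \ge 2$. -/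
lemma le_of_cons_le {d : Bool} {x y : ℕ → Bool}
    (h : lexLe (consSeq d x) (consSeq d y)) : lexLe x y := by
  rcases h with heq | ⟨n, hag, hlt⟩
  · left; funext k
    have := congrFun heq (k + 1)
    simpa [consSeq] using this
  · cases n with
    | zero => simp [consSeq] at hlt
    | succ j =>
      right
      refine ⟨j, fun k hk => ?_, by simpa [consSeq] using hlt⟩
      have := hag (k + 1) (by omega)
      simpa [consSeq] using this

lemma le_consTrue (w : ℕ → Bool) : lexLe w (consSeq true w) := by
  by_cases h : ∃ m, w m = false
  · obtain ⟨m, hm, hmin⟩ := Nat.find_spec h, Nat.find h, fun k (hk : k < Nat.find h) => Nat.find_min h hk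
    right
    refine ⟨Nat.find h, fun k hk => ?_, ?_⟩
    · have hk' : w k = true := by
        have := Nat.find_min h hk
        simpa using this
      cases k with
      | zero => simp [consSeq, hk']
      | succ j =>
        have hj : w j = true := by
          have := Nat.find_min h (by omega : j < Nat.find h)
          simpa using this
        simp [consSeq, hk', hj]
    · have hf : w (Nat.find h) = false := Nat.find_spec h
      cases hNf : Nat.find h with
      | zero => simp [consSeq, hNf ▸ hf]
      | succ j =>
        have hj : w j = true := by
          have := Nat.find_min h (by omega : j < Nat.find h)
          simpa using this
        rw [hNf] at hf
        simp [consSeq, hf, hj]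
  · left
    funext k
    have hall : ∀ m, w m = true := fun m => by
      by_contra hc
      exact h ⟨m, by simpa using hc⟩
    cases k with
    | zero => simp [consSeq, hall 0]
    | succ j => simp [consSeq, hall j, hall (j + 1)]

lemma consFalse_le (w : ℕ → Bool) : lexLe (consSeq false w) w := by
  by_cases h : ∃ m, w m = true
  · right
    refine ⟨Nat.find h, fun k hk => ?_, ?_⟩
    · have hk' : w k = false := by
        have := Nat.find_min h hk
        simpa using this
      cases k with
      | zero => simp [consSeq, hk']
      | succ j =>
        have hj : w j = false := by
          have := Nat.find_min h (by omega : j < Nat.find h)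
          simpa using this
        simp [consSeq, hk', hj]
    · have hf : w (Nat.find h) = true := Nat.find_spec h
      cases hNf : Nat.find h with
      | zero => simp [consSeq, hNf ▸ hf]
      | succ j =>
        have hj : w j = false := by
          have := Nat.find_min h (by omega : j < Nat.find h)
          simpa using this
        rw [hNf] at hf
        simp [consSeq, hf, hj]
  · left
    funext k
    have hall : ∀ m, w m = false := fun m => by
      by_contra hc
      exact h ⟨m, by simpa using hc⟩
    cases k with
    | zero => simp [consSeq, hall 0]
    | succ j => simp [consSeq, hall j, hall (j + 1)]

lemma fst_of_le_consFalse {v b : ℕ → Bool} (h : lexLe v (consSeq false b)) :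
    v 0 = false := by
  rcases h with heq | ⟨n, hag, hlt⟩
  · have := congrFun heq 0; simpa [consSeq] using this
  · cases n with
    | zero => simp [consSeq, Bool.lt_iff] at hlt
    | succ j =>
      have := hag 0 (by omega)
      simpa [consSeq] using this

lemma fst_of_consTrue_le {v a : ℕ → Bool} (h : lexLe (consSeq true a) v) :
    v 0 = true := by
  rcases h with heq | ⟨n, hag, hlt⟩
  · have := congrFun heq 0; simp [consSeq] at this; exact this
  · cases n with
    | zero => simp [consSeq, Bool.lt_iff] at hlt
    | succ j =>
      have := hag 0 (by omega)
      simp [consSeq] at this; exact this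

lemma shift_eq_cons (m : ℕ) (u : ℕ → Bool) :
    shiftSeq m u = consSeq (u m) (shiftSeq (m + 1) u) := by
  funext k
  cases k with
  | zero => simp [shiftSeq, consSeq]
  | succ j => simp [shiftSeq, consSeq]; ring_nf

theorem stmt5 (a b u : ℕ → Bool) (h0 : u 0 = false) (h1 : u 1 = true)
    (h : ∀ n, lexLe (shiftSeq n u) (consSeq false b) ∨
      lexLe (consSeq true a) (shiftSeq n u)) :
    ∀ n, 1 ≤ n → lexLe a (shiftSeq n u) ∧ lexLe (shiftSeq n u) b := by
  intro n
  induction n using Nat.strong_induction_on with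
  | _ n ih =>
    intro hn
    obtain ⟨m, rfl⟩ : ∃ m, n = m + 1 := ⟨n - 1, by omega⟩
    have hshift : shiftSeq m u = consSeq (u m) (shiftSeq (m + 1) u) := shift_eq_cons m u
    constructor
    · -- lower bound
      rcases h (m + 1) with hc | hc
      · have hf : u (m + 1) = false := by
          have := fst_of_le_consFalse hc
          simpa [shiftSeq] using this
        have hm1 : 1 ≤ m := by
          rcases Nat.eq_zero_or_pos m with rfl | h' 
          · rw [h1] at hf; exact absurd hf (by simp)
          · exact h'
        cases hum : u m with
        | true =>
          rcases h m with hc' | hc'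
          · have := fst_of_le_consFalse hc'
            rw [show shiftSeq m u 0 = u m by simp [shiftSeq], hum] at this
            exact absurd this (by simp)
          · rw [hshift, hum] at hc'
            exact le_of_cons_le hc'
        | false =>
          have hIH := (ih m (by omega) hm1).1
          rw [hshift, hum] at hIH
          exact lexLe_trans hIH (consFalse_le _)
      · exact lexLe_trans (le_consTrue a) hc
    · -- upper bound
      rcases h m with hc | hc
      · have hf : u m = false := by
          have := fst_of_le_consFalse hc
          simpa [shiftSeq] using this
        rw [hshift, hf] at hc
        exact le_of_cons_le hc
      · have ht : u m = true := by
          have := fst_of_consTrue_le hc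
          simpa [shiftSeq] using this
        have hm1 : 1 ≤ m := by
          rcases Nat.eq_zero_or_pos m with rfl | h'
          · rw [h0] at ht; exact absurd ht (by simp)
          · exact h'
        have hIH := (ih m (by omega) hm1).2
        rw [hshift, ht] at hIH
        exact lexLe_trans (le_consTrue _) hIH
end

section
/- Define the substitutions $L, M, R$ on $\{0,1\}$-words by $L(0)=0$, $L(1)=10$; $M(0)=01$, $M(1)=10$; $R(0)=01$, $R(1)=1$, extended to infinite sequences letter by letter. Then each of $L, M, R$ is strictly increasing with respect to the lexicographic order on $\{0,1\}^\infty$: if $\mathbf{u} < \mathbf{v}$ then $\sigma(\mathbf{u}) < \sigma(\mathbf{v})$ for $\sigma \in \{L, M, R\}$. -/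
def Lsub : Bool → List Bool := fun b => cond b [true, false] [false]

def Msub : Bool → List Bool := fun b => cond b [true, false] [false, true]

def Rsub : Bool → List Bool := fun b => cond b [true] [false, true]

/-- The image of an infinite sequence under a substitution (letterwise
concatenation); the `n`-th letter is well defined as soon as each letter image
is nonempty. -/
def subSeq (σ : Bool → List Bool) (u : ℕ → Bool) : ℕ → Bool :=
  fun n => (((List.range (n + 1)).map (fun j => σ (u j))).flatten).getD n false

/-!
If `u` and `v` first differ at position `n`, then `σ u` and `σ v` agree on the common prefix
`σ(u₀ ⋯ uₙ₋₁)` and at the next position carry the first letters of `σ(uₙ)` and `σ(vₙ)`.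
For `L`, `M` and `R` the image of every letter begins with that letter, so the order of
`uₙ < vₙ` is copied to the first difference of the images.
-/

theorem List.IsPrefix.getD_eq {α : Type*} {l₁ l₂ : List α} (h : l₁ <+: l₂) {i : ℕ}
    (hi : i < l₁.length) (d : α) : l₂.getD i d = l₁.getD i d := by
  obtain ⟨t, rfl⟩ := h
  exact List.getD_append _ _ _ _ hi

namespace Substitution

variable (σ : Bool → List Bool) (u : ℕ → Bool)

def imagePrefix (N : ℕ) : List Bool :=
  ((List.range N).map (fun j => σ (u j))).flatten

theorem imagePrefix_succ (N : ℕ) : imagePrefix σ u (N + 1) = imagePrefix σ u N ++ σ (u N) := by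
  simp [imagePrefix, List.range_succ]

theorem imagePrefix_prefix {N M : ℕ} (h : N ≤ M) : imagePrefix σ u N <+: imagePrefix σ u M := by
  obtain ⟨d, rfl⟩ := Nat.exists_eq_add_of_le h
  rw [imagePrefix, imagePrefix, List.range_add, List.map_append]
  exact (List.prefix_append _ _).flatten

theorem imagePrefix_congr {u v : ℕ → Bool} {n : ℕ} (h : ∀ k < n, u k = v k) :
    imagePrefix σ u n = imagePrefix σ v n := by
  unfold imagePrefix
  congr 1
  exact List.map_congr_left fun j hj => by rw [h j (List.mem_range.mp hj)]

variable {σ}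

theorem le_length_imagePrefix (hne : ∀ b, σ b ≠ []) (N : ℕ) : N ≤ (imagePrefix σ u N).length := by
  induction N with
  | zero => simp
  | succ N ih =>
    have : 0 < (σ (u N)).length := List.length_pos_iff.mpr (hne (u N))
    rw [imagePrefix_succ, List.length_append]
    omega

theorem subSeq_eq_getD_imagePrefix (hne : ∀ b, σ b ≠ []) {k N : ℕ}
    (hk : k < (imagePrefix σ u N).length) : subSeq σ u k = (imagePrefix σ u N).getD k false := by
  have hk' : k < (imagePrefix σ u (k + 1)).length :=
    (Nat.lt_succ_self k).trans_le (le_length_imagePrefix u hne _)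
  change (imagePrefix σ u (k + 1)).getD k false = _
  rw [← (imagePrefix_prefix σ u (le_max_left _ N)).getD_eq hk',
    (imagePrefix_prefix σ u (le_max_right (k + 1) N)).getD_eq hk]

theorem subSeq_length_imagePrefix (hne : ∀ b, σ b ≠ []) (n : ℕ) :
    subSeq σ u (imagePrefix σ u n).length = (σ (u n)).getD 0 false := by
  have hlen : (imagePrefix σ u n).length < (imagePrefix σ u (n + 1)).length := by
    rw [imagePrefix_succ, List.length_append]
    exact Nat.lt_add_of_pos_right (List.length_pos_iff.mpr (hne (u n)))
  rw [subSeq_eq_getD_imagePrefix u hne hlen, imagePrefix_succ,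
    List.getD_append_right _ _ _ _ le_rfl, Nat.sub_self]

theorem lexLt_subSeq (hhead : ∀ b, ∃ w, σ b = b :: w) {u v : ℕ → Bool} (h : lexLt u v) :
    lexLt (subSeq σ u) (subSeq σ v) := by
  have hne : ∀ b, σ b ≠ [] := fun b => by
    obtain ⟨w, hw⟩ := hhead b
    exact hw ▸ List.cons_ne_nil b w
  have hfirst : ∀ b, (σ b).getD 0 false = b := fun b => by
    obtain ⟨w, hw⟩ := hhead b
    rw [hw, List.getD_cons_zero]
  obtain ⟨n, heq, hlt⟩ := h
  have hpre := imagePrefix_congr σ heq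
  refine ⟨(imagePrefix σ u n).length, fun k hk => ?_, ?_⟩
  · rw [subSeq_eq_getD_imagePrefix u hne hk, subSeq_eq_getD_imagePrefix v hne (hpre ▸ hk), hpre]
  · rw [subSeq_length_imagePrefix u hne, hpre, subSeq_length_imagePrefix v hne, hfirst, hfirst]
    exact hlt

end Substitution

/-- Each of the substitutions `L`, `M`, `R` is strictly increasing for the
lexicographic order on infinite binary sequences. -/
theorem stmt6 (σ : Bool → List Bool) (hσ : σ = Lsub ∨ σ = Msub ∨ σ = Rsub)
    (u v : ℕ → Bool) (h : lexLt u v) : lexLt (subSeq σ u) (subSeq σ v) := by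
  have hhead : ∀ b, ∃ w, σ b = b :: w := by
    rcases hσ with rfl | rfl | rfl <;> rintro (_ | _) <;> exact ⟨_, rfl⟩
  exact Substitution.lexLt_subSeq hhead h
end

section
/- For $k \ge 0$ let $\sigma = L^k M$ where $L(0)=0$, $L(1)=10$, $M(0)=01$, $M(1)=10$ are substitutions composed as maps on words. Then the limit word $\sigma(\overline{0})$ equals the periodic sequence $01\overline{0^k01}$, and for real $q_0, q_1 > 1$, the equation $q_1 \sum_{n=1}^\infty i_n/(q_{i_1}\cdots q_{i_n}) = 1$ with $(i_n) = 01\overline{0^k01}$ holds if and only if $q_1 = \frac{1}{q_0^k(q_0-1)}$ (assuming $q_0^k(q_0-1) < 1$ so that $q_1 > 1$). -/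
/-- Composition of substitutions: `(compSub σ τ) b` is the word `σ(τ(b))`. -/
def compSub (σ τ : Bool → List Bool) : Bool → List Bool := fun b => (τ b).flatMap σ

/-! Since `L` fixes `0` and `L(1) = 10`, induction on `k` gives `L^k M(0) = 010^k`, so
`σ(0̄)` is the periodic repetition of this word. A purely periodic expansion is self-similar:
with `P = q₀^(k+1) q₁` the product of the bases over one period,
`π = 1/(q₀ q₁) + π/P`, i.e. `π (P - 1) = q₀^k`, and then `q₁ π = 1` is equivalent to
`q₁ q₀^k (q₀ - 1) = 1`. -/

namespace List

theorem getD_flatten_replicate {α : Type*} (w : List α) (d : α) :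
    ∀ {m n : ℕ}, n < m * w.length →
      (replicate m w).flatten.getD n d = w.getD (n % w.length) d
  | 0, n, h => by omega
  | m + 1, n, h => by
    rw [replicate_succ, flatten_cons]
    rcases Nat.lt_or_ge n w.length with hn | hn
    · rw [getD_append _ _ _ _ hn, Nat.mod_eq_of_lt hn]
    · rw [getD_append_right _ _ _ _ hn, Nat.mod_eq_sub_mod hn,
        getD_flatten_replicate w d (by rw [Nat.succ_mul] at h; omega)]

end List

theorem subSeq_const_eq_getD_mod {σ : Bool → List Bool} {b : Bool} (hb : σ b ≠ []) (n : ℕ) :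
    subSeq σ (fun _ => b) n = (σ b).getD (n % (σ b).length) false := by
  have hlen : 0 < (σ b).length := List.length_pos_iff.mpr hb
  rw [subSeq, List.map_const', List.length_range]
  exact List.getD_flatten_replicate _ _ (by nlinarith)

theorem flatMap_Lsub_replicate_false (k : ℕ) :
    (List.replicate k false).flatMap Lsub = List.replicate k false := by
  induction k with
  | zero => rfl
  | succ k ih => simpa [List.replicate_succ, Lsub] using ih

theorem iterate_compSub_Lsub_Msub_false (k : ℕ) :
    ((compSub Lsub)^[k] Msub) false = false :: true :: List.replicate k false := by
  induction k with
  | zero => rfl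
  | succ k ih =>
    rw [Function.iterate_succ_apply', compSub, ih]
    simp [Lsub, List.replicate_succ, flatMap_Lsub_replicate_false]

theorem getD_false_true_replicate_false (k r : ℕ) :
    (false :: true :: List.replicate k false).getD r false = decide (r = 1) := by
  match r with
  | 0 => rfl
  | 1 => rfl
  | r + 2 =>
    rw [List.getD_cons_succ, List.getD_cons_succ]
    simp only [List.getD_eq_getElem?_getD, List.getElem?_replicate]
    split_ifs <;> rfl

theorem subSeq_iterate_compSub_Lsub_Msub (k : ℕ) :
    subSeq ((compSub Lsub)^[k] Msub) (fun _ => false) = fun n => decide (n % (k + 2) = 1) := by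
  funext n
  rw [subSeq_const_eq_getD_mod (by simp [iterate_compSub_Lsub_Msub_false]),
    iterate_compSub_Lsub_Msub_false, getD_false_true_replicate_false]
  simp

section Expansion

variable (q0 q1 : ℝ) (i : ℕ → Bool)

-- `piDenom q0 q1 i n` is `q_{i_1} ⋯ q_{i_n}`; the sequence is indexed from `0`.
noncomputable def piDenom (n : ℕ) : ℝ := ∏ j ∈ Finset.range n, cond (i j) q1 q0

noncomputable def piTerm (n : ℕ) : ℝ := (cond (i n) 1 0 : ℝ) / piDenom q0 q1 i (n + 1)

theorem piR_eq_tsum_piTerm : piR q0 q1 i = ∑' n, piTerm q0 q1 i n := rfl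

variable {q0 q1}

theorem pow_le_piDenom {m : ℝ} (hm : 0 ≤ m) (hm0 : m ≤ q0) (hm1 : m ≤ q1) (n : ℕ) :
    m ^ n ≤ piDenom q0 q1 i n := by
  calc m ^ n = ∏ _j ∈ Finset.range n, m := by rw [Finset.prod_const, Finset.card_range]
    _ ≤ piDenom q0 q1 i n :=
      Finset.prod_le_prod (fun _ _ => hm) fun j _ => by cases i j <;> assumption

theorem summable_piTerm (h0 : 1 < q0) (h1 : 1 < q1) : Summable (piTerm q0 q1 i) := by
  set m := min q0 q1
  have hm : 1 < m := lt_min h0 h1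
  have hdenom (n : ℕ) : m ^ (n + 1) ≤ piDenom q0 q1 i (n + 1) :=
    pow_le_piDenom i (by positivity) (min_le_left _ _) (min_le_right _ _) _
  have hdenom_pos (n : ℕ) : 0 < piDenom q0 q1 i (n + 1) :=
    (pow_pos (by positivity) _).trans_le (hdenom n)
  have hdigit (n : ℕ) : (cond (i n) 1 0 : ℝ) ∈ Set.Icc 0 1 := by cases i n <;> simp
  refine ((summable_geometric_of_lt_one (by positivity) (inv_lt_one_of_one_lt₀ hm)).mul_left
    m⁻¹).of_nonneg_of_le (fun n => div_nonneg (hdigit n).1 (hdenom_pos n).le) fun n => ?_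
  calc piTerm q0 q1 i n ≤ 1 / piDenom q0 q1 i (n + 1) :=
        div_le_div_of_nonneg_right (hdigit n).2 (hdenom_pos n).le
    _ ≤ 1 / m ^ (n + 1) := one_div_le_one_div_of_le (by positivity) (hdenom n)
    _ = m⁻¹ * m⁻¹ ^ n := by rw [one_div, ← inv_pow, pow_succ']

theorem piDenom_add_of_periodic {p : ℕ} (hi : Function.Periodic i p) (n : ℕ) :
    piDenom q0 q1 i (p + n) = piDenom q0 q1 i p * piDenom q0 q1 i n := by
  simp only [piDenom, Finset.prod_range_add]
  congr 1
  exact Finset.prod_congr rfl fun j _ => by rw [add_comm, hi]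

theorem piTerm_add_of_periodic {p : ℕ} (hi : Function.Periodic i p) (n : ℕ) :
    piTerm q0 q1 i (n + p) = piTerm q0 q1 i n / piDenom q0 q1 i p := by
  rw [piTerm, piTerm, hi, add_right_comm, add_comm _ p, piDenom_add_of_periodic i hi, div_div,
    mul_comm]

theorem piR_eq_of_periodic (h0 : 1 < q0) (h1 : 1 < q1) {p : ℕ} (hi : Function.Periodic i p) :
    piR q0 q1 i = ∑ r ∈ Finset.range p, piTerm q0 q1 i r + piR q0 q1 i / piDenom q0 q1 i p := by
  have h := (summable_piTerm i h0 h1).sum_add_tsum_nat_add p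
  simp only [piTerm_add_of_periodic i hi, tsum_div_const] at h
  rw [piR_eq_tsum_piTerm]
  exact h.symm

end Expansion

section Period

variable (k : ℕ) (q0 q1 : ℝ)

theorem piDenom_period :
    piDenom q0 q1 (fun n => decide (n % (k + 2) = 1)) (k + 2) = q0 ^ (k + 1) * q1 := by
  have h1 : 1 ∈ Finset.range (k + 2) := by simp
  rw [piDenom, ← Finset.mul_prod_erase _ _ h1, Finset.prod_congr rfl (g := fun _ => q0),
    Finset.prod_const, Finset.card_erase_of_mem h1, Finset.card_range]
  · simp [Nat.mod_eq_of_lt, mul_comm]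
  · intro j hj
    obtain ⟨hj1, hj⟩ := Finset.mem_erase.mp hj
    simp [Nat.mod_eq_of_lt (Finset.mem_range.mp hj), hj1]

theorem sum_piTerm_period :
    ∑ r ∈ Finset.range (k + 2), piTerm q0 q1 (fun n => decide (n % (k + 2) = 1)) r
      = 1 / (q0 * q1) := by
  rw [Finset.sum_eq_single 1]
  · simp [piTerm, piDenom, Finset.prod_range_succ, Nat.mod_eq_of_lt]
  · intro r hr hr1
    simp [piTerm, Nat.mod_eq_of_lt (Finset.mem_range.mp hr), hr1]
  · simp

end Period

theorem stmt9_general (k : ℕ) (q0 q1 : ℝ) (h0 : 1 < q0) (h1 : 1 < q1) :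
    subSeq ((compSub Lsub)^[k] Msub) (fun _ => false) =
      (fun n => decide (n % (k + 2) = 1)) ∧
    (q1 * piR q0 q1 (fun n => decide (n % (k + 2) = 1)) = 1 ↔
      q1 = 1 / (q0 ^ k * (q0 - 1))) := by
  refine ⟨subSeq_iterate_compSub_Lsub_Msub k, ?_⟩
  have hi : Function.Periodic (fun n => decide (n % (k + 2) = 1)) (k + 2) :=
    (Nat.periodic_mod (k + 2)).comp fun r => decide (r = 1)
  set S := piR q0 q1 (fun n => decide (n % (k + 2) = 1))
  have hS : S = 1 / (q0 * q1) + S / (q0 ^ (k + 1) * q1) := by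
    simpa only [sum_piTerm_period, piDenom_period] using piR_eq_of_periodic _ h0 h1 hi
  have hq0k : 0 < q0 ^ k := by positivity
  have key : S * (q0 ^ (k + 1) * q1 - 1) = q0 ^ k := by
    field_simp at hS
    refine mul_left_cancel₀ (by positivity : q0 ≠ 0) ?_
    linear_combination hS
  rw [eq_div_iff (mul_pos hq0k (sub_pos.mpr h0)).ne']
  constructor
  · intro h
    linear_combination (1 - q0 ^ (k + 1) * q1) * h + q1 * key
  · intro h
    refine mul_right_cancel₀ hq0k.ne' ?_
    linear_combination key - S * h

theorem stmt9 (k : ℕ) (q0 q1 : ℝ) (h0 : 1 < q0) (h1 : 1 < q1)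
    (hk : q0 ^ k * (q0 - 1) < 1) :
    subSeq ((compSub Lsub)^[k] Msub) (fun _ => false) =
      (fun n => decide (n % (k + 2) = 1)) ∧
    (q1 * piR q0 q1 (fun n => decide (n % (k + 2) = 1)) = 1 ↔
      q1 = 1 / (q0 ^ k * (q0 - 1))) :=
  stmt9_general k q0 q1 h0 h1
end

section
/- Let $\mathbf{u} = 01 i_1 i_2 \cdots$ be a binary sequence with $(i_k) \ne \overline{0}$ and such that the gaps between consecutive $0$s in $\mathbf{u}$ are bounded. Define $f_{\mathbf{u}}(q_0,q_1) = 1 - q_0 + \sum_{k=1}^\infty i_k/(q_{i_1}\cdots q_{i_k})$ for $q_0 > 1$, $q_1 \ge 1$. Then $f_{\mathbf{u}}$ is continuous and strictly decreasing in each of the variables $q_0$ and $q_1$ (for $q_0, q_1 > 1$), and there is a unique $q_0 > 1$ with $f_{\mathbf{u}}(q_0, 1) = 0$. -/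
namespace Stmt11Aux

noncomputable def trm (i : ℕ → Bool) (q0 q1 : ℝ) (k : ℕ) : ℝ :=
  (cond (i k) 1 0 : ℝ) / ∏ j ∈ Finset.range (k + 1), (cond (i j) q1 q0)

lemma piR_eq (q0 q1 : ℝ) (i : ℕ → Bool) : piR q0 q1 i = ∑' k, trm i q0 q1 k := rfl

variable {i : ℕ → Bool} {N : ℕ} {q0 q1 c : ℝ}

lemma one_le_factor (h0 : 1 ≤ q0) (h1 : 1 ≤ q1) (b : Bool) :
    1 ≤ (cond b q1 q0 : ℝ) := by cases b <;> simpa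

lemma one_le_prodF (h0 : 1 ≤ q0) (h1 : 1 ≤ q1) (s : Finset ℕ) :
    1 ≤ ∏ j ∈ s, (cond (i j) q1 q0) :=
  Finset.prod_induction _ (fun x => 1 ≤ x)
    (fun a b ha hb => le_trans ha (le_mul_of_one_le_right (by linarith) hb))
    le_rfl (fun j _ => one_le_factor h0 h1 _)

lemma prodF_pos (h0 : 1 ≤ q0) (h1 : 1 ≤ q1) (s : Finset ℕ) :
    0 < ∏ j ∈ s, (cond (i j) q1 q0) :=
  lt_of_lt_of_le one_pos (one_le_prodF h0 h1 s)

/-- block lower bound from the gap condition -/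
lemma block_ge (hg : ∀ n : ℕ, ∃ m, n ≤ m ∧ m ≤ n + N ∧ i m = false)
    (hc : 1 ≤ c) (hq0 : c ≤ q0) (h1 : 1 ≤ q1) (n : ℕ) :
    c ^ n ≤ ∏ j ∈ Finset.range ((N + 1) * n), (cond (i j) q1 q0) := by
  have h0 : (1 : ℝ) ≤ q0 := hc.trans hq0
  induction n with
  | zero => simp
  | succ n ih =>
    rw [Nat.mul_succ, Finset.prod_range_add]
    obtain ⟨m, hm1, hm2, hmf⟩ := hg ((N + 1) * n)
    have hsingle : c ≤ ∏ j ∈ Finset.range (N + 1), (cond (i ((N + 1) * n + j)) q1 q0) := by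
      have hmem : m - (N + 1) * n ∈ Finset.range (N + 1) := by
        simp only [Finset.mem_range]; omega
      rw [← Finset.mul_prod_erase _ _ hmem]
      have heq : (N + 1) * n + (m - (N + 1) * n) = m := by omega
      rw [heq, hmf]
      calc c = c * 1 := by ring
      _ ≤ q0 * ∏ j ∈ (Finset.range (N+1)).erase (m - (N+1)*n),
            (cond (i ((N + 1) * n + j)) q1 q0) := by
          apply mul_le_mul hq0 _ zero_le_one (by linarith)
          exact Finset.prod_induction _ (fun x => 1 ≤ x)
            (fun a b ha hb => le_trans ha (le_mul_of_one_le_right (by linarith) hb))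
            le_rfl (fun j _ => one_le_factor h0 h1 _)
    calc c ^ (n + 1) = c ^ n * c := by ring
    _ ≤ _ := mul_le_mul ih hsingle (le_trans zero_le_one hc) (le_of_lt
        (prodF_pos h0 h1 _))

lemma prodF_ge (hg : ∀ n : ℕ, ∃ m, n ≤ m ∧ m ≤ n + N ∧ i m = false)
    (hc : 1 ≤ c) (hq0 : c ≤ q0) (h1 : 1 ≤ q1) (k : ℕ) :
    c ^ ((k + 1) / (N + 1)) ≤ ∏ j ∈ Finset.range (k + 1), (cond (i j) q1 q0) := by
  have h0 : (1 : ℝ) ≤ q0 := hc.trans hq0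
  calc c ^ ((k + 1) / (N + 1))
      ≤ ∏ j ∈ Finset.range ((N + 1) * ((k + 1) / (N + 1))), (cond (i j) q1 q0) :=
        block_ge hg hc hq0 h1 _
    _ ≤ ∏ j ∈ Finset.range (k + 1), (cond (i j) q1 q0) := by
        set m := (N + 1) * ((k + 1) / (N + 1)) with hm
        have hmle : m ≤ k + 1 := Nat.mul_div_le (k + 1) (N + 1)
        have hsplit : k + 1 = m + (k + 1 - m) := by omega
        rw [hsplit, Finset.prod_range_add]
        exact le_mul_of_one_le_right (le_of_lt (prodF_pos h0 h1 _))
          (one_le_prodF h0 h1 _)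

lemma trm_nonneg (h0 : 1 ≤ q0) (h1 : 1 ≤ q1) (k : ℕ) : 0 ≤ trm i q0 q1 k := by
  apply div_nonneg
  · cases i k <;> simp
  · exact le_of_lt (prodF_pos h0 h1 _)

/-- the summable dominating sequence -/
noncomputable def bnd (c : ℝ) (N k : ℕ) : ℝ := (1 / c) ^ ((k + 1) / (N + 1))

lemma trm_le_bnd (hg : ∀ n : ℕ, ∃ m, n ≤ m ∧ m ≤ n + N ∧ i m = false)
    (hc : 1 < c) (hq0 : c ≤ q0) (h1 : 1 ≤ q1) (k : ℕ) :
    trm i q0 q1 k ≤ bnd c N k := by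
  have h0 : (1 : ℝ) ≤ q0 := hc.le.trans hq0
  have hcpos : (0 : ℝ) < c := lt_trans one_pos hc
  have hpow : (0 : ℝ) < c ^ ((k + 1) / (N + 1)) := pow_pos hcpos _
  have hnum : (cond (i k) 1 0 : ℝ) ≤ 1 := by cases i k <;> simp
  unfold trm bnd
  rw [one_div, inv_pow, ← one_div]
  exact div_le_div₀ zero_le_one hnum hpow (prodF_ge hg hc.le hq0 h1 k)

lemma bnd_nonneg (hc : 1 < c) (k : ℕ) : 0 ≤ bnd c N k := by
  have : (0:ℝ) < c := lt_trans one_pos hc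
  exact pow_nonneg (by positivity) _

lemma summable_bnd (hc : 1 < c) : Summable (bnd c N) := by
  have hcpos : (0 : ℝ) < c := lt_trans one_pos hc
  set r : ℝ := 1 / c with hr
  have hr0 : 0 < r := by positivity
  have hr1 : r < 1 := by
    rw [hr, div_lt_one hcpos]; exact hc
  set ρ : ℝ := r ^ ((1 : ℝ) / (N + 1)) with hρ
  have hρ0 : 0 < ρ := Real.rpow_pos_of_pos hr0 _
  have hρ1 : ρ < 1 := Real.rpow_lt_one hr0.le hr1 (by positivity)
  have hρpow : ρ ^ (N + 1) = r := by
    have hN0 : ((N : ℝ) + 1) ≠ 0 := by positivity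
    rw [hρ, ← Real.rpow_natCast (r ^ ((1 : ℝ) / (N + 1))) (N + 1),
      ← Real.rpow_mul hr0.le]
    push_cast
    rw [one_div, inv_mul_cancel₀ hN0, Real.rpow_one]
  have key : ∀ k, bnd c N k ≤ (1 / ρ ^ N) * ρ ^ k := by
    intro k
    set t := (k + 1) / (N + 1) with ht
    have hk : k ≤ (N + 1) * t + N := by
      have h1 : (N + 1) * t + (k + 1) % (N + 1) = k + 1 :=
        Nat.div_add_mod (k + 1) (N + 1)
      have h2 : (k + 1) % (N + 1) < N + 1 := Nat.mod_lt (k + 1) (by omega)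
      omega
    have h3 : ρ ^ ((N + 1) * t + N) ≤ ρ ^ k :=
      pow_le_pow_of_le_one hρ0.le hρ1.le hk
    have h4 : ρ ^ ((N + 1) * t + N) = r ^ t * ρ ^ N := by
      rw [pow_add, pow_mul, hρpow]
    rw [h4] at h3
    have hρN : (0:ℝ) < ρ ^ N := pow_pos hρ0 _
    calc bnd c N k = r ^ t := rfl
    _ ≤ ρ ^ k / ρ ^ N := (le_div_iff₀ hρN).2 h3
    _ = (1 / ρ ^ N) * ρ ^ k := by ring
  exact Summable.of_nonneg_of_le (fun k => bnd_nonneg hc k) key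
    ((summable_geometric_of_lt_one hρ0.le hρ1).mul_left _)

lemma summable_trm (hg : ∀ n : ℕ, ∃ m, n ≤ m ∧ m ≤ n + N ∧ i m = false)
    (h0 : 1 < q0) (h1 : 1 ≤ q1) : Summable (trm i q0 q1) :=
  Summable.of_nonneg_of_le (trm_nonneg h0.le h1)
    (fun k => trm_le_bnd hg h0 le_rfl h1 k) (summable_bnd h0)

/-- monotone comparison of terms in both variables -/
lemma trm_anti {a0 b0 a1 b1 : ℝ} (ha0 : 1 ≤ a0) (ha1 : 1 ≤ a1)
    (h00 : a0 ≤ b0) (h11 : a1 ≤ b1) (k : ℕ) :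
    trm i b0 b1 k ≤ trm i a0 a1 k := by
  have hprod : ∏ j ∈ Finset.range (k + 1), (cond (i j) a1 a0) ≤
      ∏ j ∈ Finset.range (k + 1), (cond (i j) b1 b0) := by
    apply Finset.prod_le_prod
    · intro j _
      exact le_trans zero_le_one (one_le_factor ha0 ha1 _)
    · intro j _; cases i j <;> simpa
  have hnum : (0 : ℝ) ≤ (cond (i k) 1 0 : ℝ) := by cases i k <;> simp
  exact div_le_div_of_nonneg_left hnum (prodF_pos ha0 ha1 _) hprod

end Stmt11Aux

open Stmt11Aux in
theorem stmt11 (u : ℕ → Bool) (h0 : u 0 = false) (h1 : u 1 = true)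
    (hne : shiftSeq 2 u ≠ fun _ => false)
    (hgap : ∃ N : ℕ, ∀ n : ℕ, ∃ m, n ≤ m ∧ m ≤ n + N ∧ u m = false) :
    ContinuousOn (fun p : ℝ × ℝ => 1 - p.1 + piR p.1 p.2 (shiftSeq 2 u))
      (Set.Ioi 1 ×ˢ Set.Ici 1) ∧
    (∀ q1 : ℝ, 1 < q1 →
      StrictAntiOn (fun q0 => 1 - q0 + piR q0 q1 (shiftSeq 2 u)) (Set.Ioi 1)) ∧
    (∀ q0 : ℝ, 1 < q0 →
      StrictAntiOn (fun q1 => 1 - q0 + piR q0 q1 (shiftSeq 2 u)) (Set.Ioi 1)) ∧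
    (∃! q0 : ℝ, 1 < q0 ∧ 1 - q0 + piR q0 1 (shiftSeq 2 u) = 0) := by
  set i : ℕ → Bool := shiftSeq 2 u with hi
  obtain ⟨N, hgapN⟩ := hgap
  -- gap condition for i
  have hg : ∀ n : ℕ, ∃ m, n ≤ m ∧ m ≤ n + N ∧ i m = false := by
    intro n
    obtain ⟨m, hm1, hm2, hmf⟩ := hgapN (n + 2)
    exact ⟨m - 2, by omega, by omega, by
      show u (2 + (m - 2)) = false
      have : 2 + (m - 2) = m := by omega
      rw [this]; exact hmf⟩
  -- an index with i k0 = true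
  have hk0 : ∃ k0, i k0 = true := by
    by_contra h
    push_neg at h
    exact hne (funext fun k => by
      have := h k; revert this; cases i k <;> simp)
  obtain ⟨k0, hk0⟩ := hk0
  -- Part 1 : continuity
  have cont : ContinuousOn (fun p : ℝ × ℝ => 1 - p.1 + piR p.1 p.2 i)
      (Set.Ioi 1 ×ˢ Set.Ici 1) := by
    apply ContinuousOn.add
    · exact (continuous_const.sub continuous_fst).continuousOn
    · intro x hx
      obtain ⟨hx1, hx2⟩ := hx
      set c : ℝ := (1 + x.1) / 2 with hc
      have hc1 : 1 < c := by simp only [hc]; simp only [Set.mem_Ioi] at hx1; linarith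
      have hcx : c < x.1 := by simp only [hc]; simp only [Set.mem_Ioi] at hx1; linarith
      have key : ContinuousOn (fun p : ℝ × ℝ => piR p.1 p.2 i)
          (Set.Ioi c ×ˢ Set.Ici 1) := by
        have heq : (fun p : ℝ × ℝ => piR p.1 p.2 i) =
            fun p : ℝ × ℝ => ∑' k, trm i p.1 p.2 k := rfl
        rw [heq]
        apply continuousOn_tsum (u := bnd c N)
        · intro k
          apply ContinuousOn.div
          · exact continuousOn_const
          · apply continuousOn_finset_prod
            intro j _
            cases i j
            · exact continuous_fst.continuousOn
            · exact continuous_snd.continuousOn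
          · intro p hp
            obtain ⟨hp1, hp2⟩ := hp
            have : 1 < p.1 := lt_trans hc1 hp1
            exact ne_of_gt (prodF_pos this.le hp2 _)
        · exact summable_bnd hc1
        · intro k p hp
          obtain ⟨hp1, hp2⟩ := hp
          simp only [Set.mem_Ioi] at hp1
          rw [Real.norm_eq_abs,
            abs_of_nonneg (trm_nonneg (le_trans hc1.le hp1.le) hp2 k)]
          exact trm_le_bnd hg hc1 hp1.le hp2 k
      have hV : (Set.Ioi c ×ˢ (Set.univ : Set ℝ)) ∈ nhds x :=
        ((isOpen_Ioi.prod isOpen_univ).mem_nhds ⟨hcx, trivial⟩)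
      have hsub : (Set.Ioi 1 ×ˢ Set.Ici 1) ∩ (Set.Ioi c ×ˢ (Set.univ : Set ℝ)) ⊆
          Set.Ioi c ×ˢ Set.Ici 1 := by
        rintro p ⟨⟨_, hp2⟩, ⟨hp3, _⟩⟩
        exact ⟨hp3, hp2⟩
      have := (key x ⟨hcx, hx2⟩).mono hsub
      exact (continuousWithinAt_inter hV).1 this
  -- strict anti in q0 (allowing q1 ≥ 1, needed for q1 = 1 too)
  have anti0 : ∀ q1 : ℝ, 1 ≤ q1 →
      StrictAntiOn (fun q0 => 1 - q0 + piR q0 q1 i) (Set.Ioi 1) := by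
    intro q1 hq1 a ha b hb hab
    simp only [Set.mem_Ioi] at ha hb
    have htsum : piR b q1 i ≤ piR a q1 i := by
      rw [piR_eq, piR_eq]
      exact Summable.tsum_le_tsum (fun k => trm_anti ha.le hq1 hab.le le_rfl k)
        (summable_trm hg hb hq1) (summable_trm hg ha hq1)
    have : 1 - b < 1 - a := by linarith
    simpa using add_lt_add_of_lt_of_le this htsum
  -- strict anti in q1
  have anti1 : ∀ q0 : ℝ, 1 < q0 →
      StrictAntiOn (fun q1 => 1 - q0 + piR q0 q1 i) (Set.Ioi 1) := by
    intro q0 hq0 a ha b hb hab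
    simp only [Set.mem_Ioi] at ha hb
    have htsum : piR q0 b i < piR q0 a i := by
      rw [piR_eq, piR_eq]
      apply Summable.tsum_lt_tsum_of_nonneg (i := k0)
        (trm_nonneg hq0.le hb.le)
        (fun k => trm_anti hq0.le ha.le le_rfl hab.le k)
      · -- strict inequality at k0
        have hprod : ∏ j ∈ Finset.range (k0 + 1), (cond (i j) a q0) <
            ∏ j ∈ Finset.range (k0 + 1), (cond (i j) b q0) := by
          apply Finset.prod_lt_prod
          · intro j _
            exact lt_of_lt_of_le one_pos (one_le_factor hq0.le ha.le _)
          · intro j _; cases i j <;> simpa using hab.le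
          · exact ⟨k0, Finset.self_mem_range_succ k0, by rw [hk0]; exact hab⟩
        unfold trm
        rw [hk0]
        simp only [cond]
        have hpa : 0 < ∏ j ∈ Finset.range (k0 + 1), (cond (i j) a q0) :=
          prodF_pos hq0.le ha.le _
        exact div_lt_div_of_pos_left one_pos hpa hprod
      · exact summable_trm hg hq0 ha.le
    show 1 - q0 + piR q0 b i < 1 - q0 + piR q0 a i
    linarith
  -- Part 4 : unique root of g(q0) = 1 - q0 + piR q0 1 i
  set g : ℝ → ℝ := fun q0 => 1 - q0 + piR q0 1 i with hgdef
  have gstrict : StrictAntiOn g (Set.Ioi 1) := anti0 1 le_rfl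
  have gcont : ContinuousOn g (Set.Ioi 1) := by
    have hmap : Set.MapsTo (fun q0 : ℝ => (q0, (1:ℝ))) (Set.Ioi 1)
        (Set.Ioi 1 ×ˢ Set.Ici 1) := fun q hq => ⟨hq, Set.self_mem_Ici⟩
    exact cont.comp ((continuous_id.prodMk continuous_const).continuousOn) hmap
  -- choose a with g a > 0
  set ε : ℝ := (1 / 2) ^ (k0 + 2) with hε
  have hε0 : 0 < ε := by positivity
  have hε1 : ε ≤ 1 / 2 := by
    calc ε ≤ (1/2 : ℝ) ^ 1 := pow_le_pow_of_le_one (by norm_num) (by norm_num) (by omega)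
    _ = 1 / 2 := pow_one _
  set a : ℝ := 1 + ε with ha
  have ha1 : 1 < a := by simp [ha]; exact hε0
  have ha2 : a ≤ 2 := by simp only [ha]; linarith
  have hga : 0 < g a := by
    have hterm : (1 / 2 : ℝ) ^ (k0 + 1) ≤ trm i a 1 k0 := by
      unfold trm
      rw [hk0]
      simp only [cond]
      have hprod : ∏ j ∈ Finset.range (k0 + 1), (cond (i j) 1 a) ≤ 2 ^ (k0 + 1) := by
        calc ∏ j ∈ Finset.range (k0 + 1), (cond (i j) 1 a)
            ≤ ∏ j ∈ Finset.range (k0 + 1), (2:ℝ) := by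
              apply Finset.prod_le_prod
              · intro j _
                exact le_trans zero_le_one (one_le_factor ha1.le le_rfl _)
              · intro j _
                cases i j
                · simpa using ha2
                · norm_num
          _ = 2 ^ (k0 + 1) := by
              rw [Finset.prod_const, Finset.card_range]
      have hppos : 0 < ∏ j ∈ Finset.range (k0 + 1), (cond (i j) 1 a) :=
        prodF_pos ha1.le le_rfl _
      rw [one_div, inv_pow, ← one_div]
      exact div_le_div₀ zero_le_one le_rfl hppos hprod
    have htsum : trm i a 1 k0 ≤ piR a 1 i := by
      rw [piR_eq]
      exact Summable.le_tsum (summable_trm hg ha1 le_rfl) k0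
        (fun j _ => trm_nonneg ha1.le le_rfl j)
    have h2 : (1/2:ℝ)^(k0+1) = 2 * ε := by
      rw [hε]; ring
    have : g a ≥ 1 - a + 2 * ε := by
      simp only [hgdef]
      have : (1:ℝ) - a + 2*ε ≤ 1 - a + piR a 1 i := by
        have := le_trans hterm htsum
        linarith [h2 ▸ this]
      linarith
    simp only [ha] at this ⊢
    linarith
  -- choose b with g b < 0
  set B : ℝ := ∑' k, bnd 2 N k with hB
  have hBnn : 0 ≤ B := tsum_nonneg (fun k => bnd_nonneg one_lt_two k)
  set b : ℝ := 2 + B + 1 with hbdef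
  have hb1 : (2:ℝ) ≤ b := by simp only [hbdef]; linarith
  have hgb : g b < 0 := by
    have htsum : piR b 1 i ≤ B := by
      rw [piR_eq, hB]
      exact Summable.tsum_le_tsum (fun k => trm_le_bnd hg one_lt_two hb1 le_rfl k)
        (summable_trm hg (by linarith) le_rfl) (summable_bnd one_lt_two)
    simp only [hgdef, hbdef] at htsum ⊢
    linarith
  have hab : a ≤ b := by linarith
  have hIccsub : Set.Icc a b ⊆ Set.Ioi 1 := fun x hx => lt_of_lt_of_le ha1 hx.1
  have hIVT := intermediate_value_Icc' hab (gcont.mono hIccsub)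
  have h0mem : (0:ℝ) ∈ Set.Icc (g b) (g a) := ⟨hgb.le, hga.le⟩
  obtain ⟨q, hq, hgq⟩ := hIVT h0mem
  have hq1 : 1 < q := lt_of_lt_of_le ha1 hq.1
  refine ⟨cont, fun q1 hq1' => anti0 q1 hq1'.le, anti1, q, ⟨hq1, hgq⟩, ?_⟩
  rintro y ⟨hy1, hy2⟩
  exact gstrict.injOn (Set.mem_Ioi.2 hy1) (Set.mem_Ioi.2 hq1)
    (by show 1 - y + piR y 1 i = 1 - q + piR q 1 i; rw [hy2]; exact hgq.symm)
end

section
/- Let $k \ge 0$. The equation $2x^{k+1} = x^k + 2$ has a unique real root $x > 1$, and this root is strictly less than the unique real root $y > 1$ of $y^{k+2} = y + 1$. -/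
private lemma keyMono (k : ℕ) {a b : ℝ} (ha : 1 ≤ a) (hab : a < b) :
    a ^ k * (2 * a - 1) < b ^ k * (2 * b - 1) := by
  have hb : 1 ≤ b := ha.trans hab.le
  have h1 : a ^ k ≤ b ^ k := pow_le_pow_left₀ (by linarith) hab.le k
  have h4 : (0 : ℝ) < b ^ k := pow_pos (by linarith) k
  calc a ^ k * (2 * a - 1) ≤ b ^ k * (2 * a - 1) :=
        mul_le_mul_of_nonneg_right h1 (by linarith)
    _ < b ^ k * (2 * b - 1) := by
        exact mul_lt_mul_of_pos_left (by linarith) h4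

theorem stmt13 (k : ℕ) :
    (∃! x : ℝ, 1 < x ∧ 2 * x ^ (k + 1) = x ^ k + 2) ∧
    ∀ x y : ℝ, 1 < x → 2 * x ^ (k + 1) = x ^ k + 2 →
      1 < y → y ^ (k + 2) = y + 1 → x < y := by
  constructor
  · -- existence and uniqueness
    have hf : Continuous (fun x : ℝ => x ^ k * (2 * x - 1)) := by continuity
    have h2k : (1 : ℝ) ≤ 2 ^ k := one_le_pow₀ (by norm_num)
    have hmem : (2 : ℝ) ∈ Set.Icc ((1:ℝ) ^ k * (2 * 1 - 1)) ((2:ℝ) ^ k * (2 * 2 - 1)) := by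
      constructor
      · simp
      · nlinarith
    obtain ⟨x, hx, hfx⟩ := intermediate_value_Icc (by norm_num : (1:ℝ) ≤ 2)
      hf.continuousOn hmem
    have hfx : x ^ k * (2 * x - 1) = 2 := hfx
    have hx1 : 1 < x := by
      rcases lt_or_eq_of_le hx.1 with h | h
      · exact h
      · exfalso; rw [← h] at hfx; simp at hfx
    refine ⟨x, ⟨hx1, by rw [pow_succ]; linear_combination hfx⟩, ?_⟩
    rintro y ⟨hy1, hyeq⟩
    have hgy : y ^ k * (2 * y - 1) = 2 := by linear_combination hyeq
    rcases lt_trichotomy y x with h | h | h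
    · exfalso
      have := keyMono k hy1.le h
      rw [hgy, hfx] at this
      exact lt_irrefl _ this
    · exact h
    · exfalso
      have := keyMono k hx1.le h
      rw [hgy, hfx] at this
      exact lt_irrefl _ this
  · intro x y hx1 hxeq hy1 hyeq
    have hgx : x ^ k * (2 * x - 1) = 2 := by linear_combination hxeq
    have h : y ^ 2 * (y ^ k * (2 * y - 1)) = (y + 1) * (2 * y - 1) := by
      calc y ^ 2 * (y ^ k * (2 * y - 1)) = y ^ (k + 2) * (2 * y - 1) := by ring
        _ = (y + 1) * (2 * y - 1) := by rw [hyeq]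
    have hy2pos : (0 : ℝ) < y ^ 2 := by positivity
    have hgy : 2 < y ^ k * (2 * y - 1) := by
      have h2 : y ^ 2 * 2 < y ^ 2 * (y ^ k * (2 * y - 1)) := by rw [h]; nlinarith
      exact lt_of_mul_lt_mul_left h2 hy2pos.le
    by_contra hcon
    push_neg at hcon
    rcases lt_or_eq_of_le hcon with h' | h'
    · have := keyMono k hy1.le h'
      rw [hgx] at this
      linarith
    · rw [h'] at hgy
      linarith [hgx]
end

section
/- Define the set $W' = \{0(01)^k, 0(01)^{k+1}\}^\infty$ of infinite concatenations of the two blocks $0(01)^k$ and $0(01)^{k+1}$, for a fixed $k \ge 0$. Then every sequence $\mathbf{u} \in W'$ satisfies $\sup\{$tails of $\mathbf{u}$ starting with $0\} < \overline{01}$ and $\inf\{$tails of $\mathbf{u}$ starting with $1\} \ge 1\overline{0(01)^k}$. -/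
/-- The block `0(01)^k`. -/
def blockB (k : ℕ) : List Bool := false :: (List.replicate k [false, true]).flatten

def lenSum (B : ℕ → List Bool) (n : ℕ) : ℕ := ∑ j ∈ Finset.range n, (B j).length

/-- `u` is the infinite concatenation of the blocks `B 0, B 1, …`. -/
def inConcat (B : ℕ → List Bool) (u : ℕ → Bool) : Prop :=
  ∀ n, ∀ j < (B n).length, u (lenSum B n + j) = (B n).getD j false

def tails0 (u : ℕ → Bool) : Set (ℕ → Bool) := {v | ∃ n, u n = false ∧ v = shiftSeq n u}

def tails1 (u : ℕ → Bool) : Set (ℕ → Bool) := {v | ∃ n, u n = true ∧ v = shiftSeq n u}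

def isLexLUB (A : Set (ℕ → Bool)) (s : ℕ → Bool) : Prop :=
  (∀ a ∈ A, lexLe a s) ∧ ∀ t, (∀ a ∈ A, lexLe a t) → lexLe s t

def isLexGLB (A : Set (ℕ → Bool)) (s : ℕ → Bool) : Prop :=
  (∀ a ∈ A, lexLe s a) ∧ ∀ t, (∀ a ∈ A, lexLe t a) → lexLe t s

/-- The periodic sequence `1 (0(01)^k)^∞`. -/
def onePer (k : ℕ) : ℕ → Bool :=
  fun m => match m with
  | 0 => true
  | m + 1 => (blockB k).getD (m % (blockB k).length) false

def entryA (j : ℕ) : Bool := decide (j % 2 = 0 ∧ j ≠ 0)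

lemma entryA_zero : entryA 0 = false := by simp [entryA]

lemma entryA_succ (q : ℕ) : entryA (q+1) = decide (q % 2 = 1) := by
  unfold entryA; rw [decide_eq_decide]; omega

lemma joinRep_getD (n : ℕ) : ∀ j, j < 2 * n →
    ((List.replicate n [false, true]).flatten).getD j false = decide (j % 2 = 1) := by
  induction n with
  | zero => intro j h; omega
  | succ n ih =>
    intro j h
    rw [List.replicate_succ]
    have e : (([false, true] :: List.replicate n [false, true]).flatten) =
        false :: true :: (List.replicate n [false, true]).flatten := rfl
    rw [e]
    match j with
    | 0 => simp
    | 1 => simp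
    | (j+2) =>
      rw [List.getD_cons_succ, List.getD_cons_succ, ih j (by omega), decide_eq_decide]
      omega

lemma blockB_getD (k : ℕ) : ∀ j, j < 2 * k + 1 → (blockB k).getD j false = entryA j := by
  intro j hj
  match j with
  | 0 => simp [blockB, entryA]
  | (j+1) =>
    rw [blockB, List.getD_cons_succ, joinRep_getD k j (by omega), entryA_succ]

lemma blockB_length (k : ℕ) : (blockB k).length = 2 * k + 1 := by
  simp [blockB, List.length_flatten, List.map_replicate, List.sum_replicate, smul_eq_mul]
  omega


-- ===== lexicographic basics =====

lemma lexLe_iff_s14 (a b : ℕ → Bool) :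
    lexLe a b ↔ ∀ n, (∀ j < n, a j = b j) → a n ≤ b n := by
  constructor
  · rintro (rfl | ⟨n, hn, hlt⟩)
    · exact fun n _ => le_refl _
    · intro m hm
      rcases lt_trichotomy m n with h | rfl | h
      · exact le_of_eq (hn m h)
      · exact le_of_lt hlt
      · exact absurd (hm n h) (ne_of_lt hlt)
  · intro H
    by_cases hab : a = b
    · exact Or.inl hab
    · right
      have hex : ∃ n, a n ≠ b n := by
        by_contra h; push_neg at h; exact hab (funext h)
      refine ⟨Nat.find hex, fun j hj => ?_, ?_⟩
      · have := Nat.find_min hex hj; simpa using this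
      · exact lt_of_le_of_ne
          (H _ (fun j hj => by simpa using Nat.find_min hex hj))
          (Nat.find_spec hex)

lemma lexLe_lexLt_trans {a b c : ℕ → Bool} (h1 : lexLe a b) (h2 : lexLt b c) :
    lexLt a c := by
  rcases h1 with rfl | ⟨n, hn, hlt1⟩
  · exact h2
  · obtain ⟨m, hm, hlt2⟩ := h2
    rcases lt_trichotomy n m with h | rfl | h
    · exact ⟨n, fun j hj => (hn j hj).trans (hm j (hj.trans h)), (hm n h) ▸ hlt1⟩
    · exact ⟨n, fun j hj => (hn j hj).trans (hm j hj), lt_trans hlt1 hlt2⟩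
    · exact ⟨m, fun j hj => (hn j (hj.trans h)).trans (hm j hj), (hn m h) ▸ hlt2⟩

-- ===== structure of u =====

def KfA (k : ℕ) (c : ℕ → Bool) (m : ℕ) : ℕ := cond (c m) (k+1) k

def LfA (k : ℕ) (c : ℕ → Bool) : ℕ → ℕ :=
  lenSum (fun n => cond (c n) (blockB (k+1)) (blockB k))

lemma LfA_zero (k : ℕ) (c : ℕ → Bool) : LfA k c 0 = 0 := by
  simp [LfA, lenSum]

lemma LfA_succ (k : ℕ) (c : ℕ → Bool) (m : ℕ) :
    LfA k c (m+1) = LfA k c m + (2 * KfA k c m + 1) := by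
  unfold LfA lenSum
  rw [Finset.sum_range_succ]
  congr 1
  cases h : c m <;> simp [KfA, h, blockB_length] <;> ring

lemma KfA_le (k : ℕ) (c : ℕ → Bool) (m : ℕ) : KfA k c m ≤ k + 1 := by
  cases h : c m <;> simp [KfA, h]

section Master

variable {k : ℕ} {c u : ℕ → Bool}
  (hc : inConcat (fun n => cond (c n) (blockB (k+1)) (blockB k)) u)

include hc

lemma u_spec (m j : ℕ) (hj : j < 2 * KfA k c m + 1) :
    u (LfA k c m + j) = entryA j := by
  have hlen : (cond (c m) (blockB (k+1)) (blockB k)).length = 2 * KfA k c m + 1 := by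
    cases h : c m <;> simp [KfA, h, blockB_length] <;> omega
  have h2 := hc m j (by rw [hlen]; exact hj)
  have h3 : (cond (c m) (blockB (k+1)) (blockB k)).getD j false = entryA j := by
    cases h : c m
    · simp only [cond_false]
      exact blockB_getD k j (by simp [KfA, h] at hj; omega)
    · simp only [cond_true]
      exact blockB_getD (k+1) j (by simp [KfA, h] at hj; omega)
  exact h3 ▸ h2

omit hc in
lemma locate (k : ℕ) (c : ℕ → Bool) (n : ℕ) :
    ∃ m j, j < 2 * KfA k c m + 1 ∧ n = LfA k c m + j := by
  induction n with
  | zero => exact ⟨0, 0, by omega, by rw [LfA_zero]⟩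
  | succ n ih =>
    obtain ⟨m, j, hj, rfl⟩ := ih
    by_cases h : j + 1 < 2 * KfA k c m + 1
    · exact ⟨m, j+1, h, by omega⟩
    · refine ⟨m+1, 0, by omega, ?_⟩
      rw [LfA_succ]; omega

lemma uZ0 (m : ℕ) : u (LfA k c m) = false := by
  have := u_spec hc m 0 (by omega)
  simpa [entryA_zero] using this

lemma uZ1 (m : ℕ) : u (LfA k c m + 1) = false := by
  by_cases h : 1 < 2 * KfA k c m + 1
  · have := u_spec hc m 1 h
    rw [this, entryA_succ]; decide
  · have : LfA k c m + 1 = LfA k c (m+1) := by rw [LfA_succ]; omega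
    rw [this]; exact uZ0 hc (m+1)

end Master

def tperF (k j : ℕ) : Bool := decide (j % (2*k+3) % 2 = 1)

def perF (k j : ℕ) : Bool := entryA (j % (2*k+1))

lemma tperF_small (k j : ℕ) (h : j < 2*k+3) : tperF k j = decide (j % 2 = 1) := by
  unfold tperF; rw [Nat.mod_eq_of_lt h]

lemma tperF_per (k j : ℕ) : tperF k (j + (2*k+3)) = tperF k j := by
  unfold tperF; rw [Nat.add_mod_right]

lemma perF_per (k j : ℕ) : perF k (j + (2*k+1)) = perF k j := by
  unfold perF; rw [Nat.add_mod_right]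

lemma perF_small (k j : ℕ) (h : j < 2*k+1) : perF k j = entryA j := by
  unfold perF; rw [Nat.mod_eq_of_lt h]

lemma onePer_succ (k q : ℕ) : onePer k (q+1) = perF k q := by
  show (blockB k).getD (q % (blockB k).length) false = _
  rw [blockB_length, perF]
  exact blockB_getD k _ (Nat.mod_lt _ (by omega))

lemma perF_one (k : ℕ) : perF k (2*k+2) = false := by
  unfold perF
  rw [show 2*k+2 = 1 + (2*k+1) by omega, Nat.add_mod_right]
  have hle : 1 % (2*k+1) ≤ 1 := Nat.mod_le 1 _
  have h : 1 % (2*k+1) = 0 ∨ 1 % (2*k+1) = 1 := by omega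
  rcases h with h | h <;> rw [h] <;> simp [entryA]

section Claims

variable {k : ℕ} {c u : ℕ → Bool}
  (hc : inConcat (fun n => cond (c n) (blockB (k+1)) (blockB k)) u)

include hc

lemma claimG : ∀ p m, (∀ j < p, u (LfA k c m + 1 + j) = tperF k j) →
    u (LfA k c m + 1 + p) ≤ tperF k p := by
  intro p
  induction p using Nat.strong_induction_on with
  | _ p ih =>
  intro m hyp
  cases hcm : c m with
  | true =>
    have hK : KfA k c m = k + 1 := by simp [KfA, hcm]
    have hL1 : LfA k c (m+1) = LfA k c m + (2*k+3) := by rw [LfA_succ, hK]; omega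
    have hval : ∀ q, q ≤ 2*k+2 → u (LfA k c m + 1 + q) = tperF k q := by
      intro q hq
      rcases Nat.lt_or_ge q (2*k+2) with h | h
      · have hs := u_spec hc m (q+1) (by omega)
        rw [show LfA k c m + 1 + q = LfA k c m + (q+1) by omega, hs,
            entryA_succ, tperF_small k q (by omega)]
      · have hq2 : q = 2*k+2 := by omega
        subst hq2
        rw [show LfA k c m + 1 + (2*k+2) = LfA k c (m+1) by omega,
            uZ0 hc, tperF_small k _ (by omega), eq_comm, decide_eq_false_iff_not]
        omega
    rcases Nat.lt_or_ge p (2*k+3) with hp | hp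
    · exact le_of_eq (hval p (by omega))
    · have hidx : LfA k c m + 1 + p = LfA k c (m+1) + 1 + (p - (2*k+3)) := by omega
      have hyp' : ∀ j < p - (2*k+3), u (LfA k c (m+1) + 1 + j) = tperF k j := by
        intro j hj
        have h1 := hyp (j + (2*k+3)) (by omega)
        rw [show LfA k c (m+1) + 1 + j = LfA k c m + 1 + (j + (2*k+3)) by omega, h1,
            tperF_per]
      have h2 := ih (p - (2*k+3)) (by omega) (m+1) hyp'
      have h3 : tperF k p = tperF k (p - (2*k+3)) := by
        conv_lhs => rw [show p = (p - (2*k+3)) + (2*k+3) by omega]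
        rw [tperF_per]
      rw [hidx, h3]; exact h2
  | false =>
    have hK : KfA k c m = k := by simp [KfA, hcm]
    have hL1 : LfA k c (m+1) = LfA k c m + (2*k+1) := by rw [LfA_succ, hK]
    have hval : ∀ q, q ≤ 2*k → u (LfA k c m + 1 + q) = tperF k q := by
      intro q hq
      rcases Nat.lt_or_ge q (2*k) with h | h
      · have hs := u_spec hc m (q+1) (by omega)
        rw [show LfA k c m + 1 + q = LfA k c m + (q+1) by omega, hs,
            entryA_succ, tperF_small k q (by omega)]
      · have hq2 : q = 2*k := by omega
        subst hq2
        rw [show LfA k c m + 1 + (2*k) = LfA k c (m+1) by omega,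
            uZ0 hc, tperF_small k _ (by omega), eq_comm, decide_eq_false_iff_not]
        omega
    rcases Nat.lt_or_ge p (2*k+1) with hp | hp
    · exact le_of_eq (hval p (by omega))
    · rcases Nat.lt_or_ge p (2*k+2) with hp2 | hp2
      · have hp3 : p = 2*k+1 := by omega
        subst hp3
        rw [show LfA k c m + 1 + (2*k+1) = LfA k c (m+1) + 1 by omega, uZ1 hc]
        exact Bool.false_le _
      · exfalso
        have h1 := hyp (2*k+1) (by omega)
        rw [show LfA k c m + 1 + (2*k+1) = LfA k c (m+1) + 1 by omega, uZ1 hc,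
            tperF_small k _ (by omega)] at h1
        simp at h1

lemma claimE : ∀ p m, (∀ j < p, perF k j = u (LfA k c m + j)) →
    perF k p ≤ u (LfA k c m + p) := by
  intro p
  induction p using Nat.strong_induction_on with
  | _ p ih =>
  intro m hyp
  cases hcm : c m with
  | false =>
    have hK : KfA k c m = k := by simp [KfA, hcm]
    have hL1 : LfA k c (m+1) = LfA k c m + (2*k+1) := by rw [LfA_succ, hK]
    rcases Nat.lt_or_ge p (2*k+1) with hp | hp
    · rw [u_spec hc m p (by omega), perF_small k p hp]
    · have hidx : LfA k c m + p = LfA k c (m+1) + (p - (2*k+1)) := by omega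
      have hyp' : ∀ j < p - (2*k+1), perF k j = u (LfA k c (m+1) + j) := by
        intro j hj
        have h1 := hyp (j + (2*k+1)) (by omega)
        rw [perF_per] at h1
        rw [show LfA k c (m+1) + j = LfA k c m + (j + (2*k+1)) by omega, ← h1]
      have h2 := ih (p - (2*k+1)) (by omega) (m+1) hyp'
      have h3 : perF k p = perF k (p - (2*k+1)) := by
        conv_lhs => rw [show p = (p - (2*k+1)) + (2*k+1) by omega]
        rw [perF_per]
      rw [hidx, h3]; exact h2
  | true =>
    have hK : KfA k c m = k + 1 := by simp [KfA, hcm]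
    rcases Nat.lt_or_ge p (2*k+1) with hp | hp
    · rw [u_spec hc m p (by omega), perF_small k p hp]
    · rcases Nat.lt_or_ge p (2*k+3) with hp2 | hp2
      · rcases Nat.lt_or_ge p (2*k+2) with hp3 | hp3
        · have hp4 : p = 2*k+1 := by omega
          subst hp4
          have : perF k (2*k+1) = false := by
            unfold perF; rw [Nat.mod_self]; exact entryA_zero
          rw [this]; exact Bool.false_le _
        · have hp4 : p = 2*k+2 := by omega
          subst hp4
          rw [perF_one]; exact Bool.false_le _
      · exfalso
        have h1 := hyp (2*k+2) (by omega)
        rw [perF_one, u_spec hc m (2*k+2) (by omega), entryA_succ] at h1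
        simp at h1

end Claims

lemma perF_1 (k : ℕ) : perF k 1 = false := by
  unfold perF
  have hle : 1 % (2*k+1) ≤ 1 := Nat.mod_le 1 _
  have h : 1 % (2*k+1) = 0 ∨ 1 % (2*k+1) = 1 := by omega
  rcases h with h | h <;> rw [h] <;> simp [entryA]

section Bounds

variable {k : ℕ} {c u : ℕ → Bool}
  (hc : inConcat (fun n => cond (c n) (blockB (k+1)) (blockB k)) u)

include hc

lemma upperB (n : ℕ) (hn : u n = false) : lexLe (shiftSeq n u) (tperF k) := by
  obtain ⟨m, j, hj, rfl⟩ := locate k c n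
  have hentry : entryA j = false := (u_spec hc m j hj) ▸ hn
  have hLs : LfA k c (m+1) = LfA k c m + (2 * KfA k c m + 1) := LfA_succ k c m
  have hKle : KfA k c m ≤ k + 1 := KfA_le k c m
  by_cases heven : j % 2 = 0
  · -- then j = 0 : block start, strict at position 1
    have hj0 : j = 0 := by
      by_contra h
      rw [entryA, decide_eq_false_iff_not] at hentry
      exact hentry ⟨heven, h⟩
    subst hj0
    refine Or.inr ⟨1, fun q hq => ?_, ?_⟩
    · have hq0 : q = 0 := by omega
      subst hq0
      show u (LfA k c m + 0 + 0) = tperF k 0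
      rw [show LfA k c m + 0 + 0 = LfA k c m by omega, uZ0 hc,
          tperF_small k 0 (by omega)]
      decide
    · show u (LfA k c m + 0 + 1) < tperF k 1
      rw [show LfA k c m + 0 + 1 = LfA k c m + 1 by omega, uZ1 hc,
          tperF_small k 1 (by omega)]
      decide
  · -- j odd
    have hjodd : j % 2 = 1 := by omega
    set K := KfA k c m with hKdef
    have hjK : j ≤ 2*K - 1 := by omega
    have hK1 : 1 ≤ K := by omega
    -- r = number of remaining (01) pairs
    set r := K - (j-1)/2 with hrdef
    have hjr' : j + 2*r = 2*K + 1 := by omega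
    have hr1 : 1 ≤ r := by omega
    rcases Nat.lt_or_ge r (k+1) with hrk | hrk
    · -- r ≤ k : strict at 2r+1
      refine Or.inr ⟨2*r+1, fun q hq => ?_, ?_⟩
      · rcases Nat.lt_or_ge q (2*r) with h | h
        · show u (LfA k c m + j + q) = tperF k q
          have hs := u_spec hc m (j+q) (by omega)
          rw [show LfA k c m + j + q = LfA k c m + (j+q) by omega, hs,
              tperF_small k q (by omega), entryA, decide_eq_decide]
          omega
        · have hq2 : q = 2*r := by omega
          subst hq2
          show u (LfA k c m + j + 2*r) = tperF k (2*r)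
          rw [show LfA k c m + j + 2*r = LfA k c (m+1) by omega, uZ0 hc,
              tperF_small k _ (by omega), eq_comm, decide_eq_false_iff_not]
          omega
      · show u (LfA k c m + j + (2*r+1)) < tperF k (2*r+1)
        rw [show LfA k c m + j + (2*r+1) = LfA k c (m+1) + 1 by omega, uZ1 hc,
            tperF_small k _ (by omega), show (2*r+1) % 2 = 1 by omega]
        decide
    · -- r = k+1 : use claimG
      have hrk1 : r = k + 1 := by omega
      have hj1 : j = 1 := by omega
      subst hj1
      rw [lexLe_iff_s14]
      intro p hp
      exact claimG hc p m (fun j' hj' => hp j' hj')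

lemma lowerB (n : ℕ) (hn : u n = true) : lexLe (onePer k) (shiftSeq n u) := by
  obtain ⟨m, j, hj, rfl⟩ := locate k c n
  have hentry : entryA j = true := (u_spec hc m j hj) ▸ hn
  have hj2 : j % 2 = 0 ∧ j ≠ 0 := by
    have := of_decide_eq_true hentry
    exact this
  have hLs : LfA k c (m+1) = LfA k c m + (2 * KfA k c m + 1) := LfA_succ k c m
  set K := KfA k c m with hKdef
  rcases Nat.lt_or_ge j (2*K) with hlt | hge
  · -- strict at position 2
    refine Or.inr ⟨2, fun q hq => ?_, ?_⟩
    · rcases Nat.lt_or_ge q 1 with h | h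
      · have hq0 : q = 0 := by omega
        subst hq0
        show onePer k 0 = u (LfA k c m + j + 0)
        rw [show LfA k c m + j + 0 = LfA k c m + j by omega]
        exact hn.symm
      · have hq1 : q = 1 := by omega
        subst hq1
        show onePer k 1 = u (LfA k c m + j + 1)
        rw [show (1:ℕ) = 0 + 1 by omega, onePer_succ,
            show LfA k c m + j + (0+1) = LfA k c m + (j+1) by omega,
            u_spec hc m (j+1) (by omega), perF_small k 0 (by omega),
            entryA_succ, entryA_zero, eq_comm, decide_eq_false_iff_not]
        omega
    · show onePer k 2 < u (LfA k c m + j + 2)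
      rw [show (2:ℕ) = 1 + 1 by omega, onePer_succ, perF_1,
          show LfA k c m + j + (1+1) = LfA k c m + (j+2) by omega,
          u_spec hc m (j+2) (by omega),
          show entryA (j+2) = true from by rw [entryA, decide_eq_true_eq]; omega]
      decide
  · -- j = 2K : last position of block, use claimE
    have hj2K : j = 2*K := by omega
    rw [lexLe_iff_s14]
    intro p hp
    cases p with
    | zero =>
      show onePer k 0 ≤ u (LfA k c m + j + 0)
      rw [show LfA k c m + j + 0 = LfA k c m + j by omega, hn]
      exact le_refl _
    | succ q =>
      show onePer k (q+1) ≤ u (LfA k c m + j + (q+1))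
      rw [onePer_succ, show LfA k c m + j + (q+1) = LfA k c (m+1) + q by omega]
      refine claimE hc q (m+1) (fun j' hj' => ?_)
      have h1 := hp (j'+1) (by omega)
      rw [onePer_succ] at h1
      rw [h1]
      show u (LfA k c m + j + (j'+1)) = _
      rw [show LfA k c m + j + (j'+1) = LfA k c (m+1) + j' by omega]

end Bounds


theorem stmt14 (k : ℕ) (u : ℕ → Bool)
    (hu : ∃ c : ℕ → Bool,
      inConcat (fun n => cond (c n) (blockB (k + 1)) (blockB k)) u) :
    (∀ s, isLexLUB (tails0 u) s → lexLt s (fun m => decide (m % 2 = 1))) ∧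
    (∀ s, isLexGLB (tails1 u) s → lexLe (onePer k) s) := by
  obtain ⟨c, hc⟩ := hu
  constructor
  · intro s hs
    have hub : ∀ a ∈ tails0 u, lexLe a (tperF k) := by
      rintro a ⟨n, hn, rfl⟩
      exact upperB hc n hn
    have h1 : lexLe s (tperF k) := hs.2 _ hub
    have h2 : lexLt (tperF k) (fun m => decide (m % 2 = 1)) := by
      refine ⟨2*k+3, fun j hj => ?_, ?_⟩
      · show tperF k j = decide (j % 2 = 1)
        exact tperF_small k j hj
      · show tperF k (2*k+3) < decide ((2*k+3) % 2 = 1)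
        have e1 : tperF k (2*k+3) = false := by
          unfold tperF
          rw [Nat.mod_self]
          decide
        rw [e1, show (2*k+3) % 2 = 1 by omega]
        decide
    exact lexLe_lexLt_trans h1 h2
  · intro s hs
    refine hs.2 _ ?_
    rintro a ⟨n, hn, rfl⟩
    exact lowerB hc n hn
end

section
/- Let $r_0, r_1 \in (0,1)$ and consider the iterated function system $y_0(x) = r_0 x + c_0$, $y_1(x) = r_1 x + c_1$ on $\mathbb{R}$ satisfying the open set condition. Then the attractor (self-similar set) of $\{y_0, y_1\}$ has Hausdorff dimension $\lambda > 0$, where $\lambda$ is the unique solution of $r_0^\lambda + r_1^\lambda = 1$. -/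
/-!
The `n`-fold compositions `y_w = y_{w₁} ∘ ⋯ ∘ y_{wₙ}` cut the attractor into pieces `y_w(K)` of
diameter `r_w · diam K`, where `r_w` is the product of the ratios along `w`, and
`∑_{|w| = n} r_w ^ λ = (r₀ ^ λ + r₁ ^ λ) ^ n = 1`; hence `μH[λ] K ≤ (diam K) ^ λ < ∞`.

For `μH[λ] K > 0`, stop every word as soon as `r_w` drops to a scale `d`. The open set condition
makes the images `y_w(V)` of the stopped words pairwise disjoint, and each contains a ball of
radius comparable to `d`, so by a volume count a set of diameter `d` meets only boundedly many
pieces `y_w(K)`, each of weight `r_w ^ λ ≤ d ^ λ`. As the stopped words of a cover carry total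
weight at least one, every finite cover of `K` by sets of diameters `D_n` has `∑ D_n ^ λ` bounded
below, and compactness of `K` passes this bound on to countable covers.
-/

open MeasureTheory Set Filter Topology Metric Function Bornology

lemma max_rpow_le_rpow_add_rpow {a b : ℝ} (ha : 0 ≤ a) (hb : 0 ≤ b) (l : ℝ) :
    max a b ^ l ≤ a ^ l + b ^ l := by
  rcases le_total a b with h | h
  · rw [max_eq_right h]
    exact le_add_of_nonneg_left (Real.rpow_nonneg ha l)
  · rw [max_eq_left h]
    exact le_add_of_nonneg_right (Real.rpow_nonneg hb l)

lemma ofReal_sum_diam_rpow_le_tsum {X : Type*} [PseudoMetricSpace X] {t : ℕ → Set X}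
    (ht : ∀ n, IsBounded (t n)) {l : ℝ} (hl : 0 < l) (F : Finset ℕ) :
    ENNReal.ofReal (∑ n ∈ F, diam (t n) ^ l) ≤ ∑' n, ⨆ _ : (t n).Nonempty, ediam (t n) ^ l := by
  rw [ENNReal.ofReal_sum_of_nonneg fun n _ ↦ Real.rpow_nonneg diam_nonneg l]
  refine (Finset.sum_le_sum fun n _ ↦ ?_).trans (ENNReal.sum_le_tsum F)
  rcases (t n).eq_empty_or_nonempty with he | hne
  · simp [he, Real.zero_rpow hl.ne']
  · rw [iSup_pos hne, ← ENNReal.ofReal_rpow_of_nonneg diam_nonneg hl.le, diam,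
      ENNReal.ofReal_toReal (ht n).ediam_ne_top]

-- Thickening `t n` by `b n / 2` gives an open cover with a finite subcover; the summability of
-- `b n ^ l` keeps the added mass at most half of the bound.
lemma le_tsum_ediam_rpow_of_finite_cover {X : Type*} [MetricSpace X] {K : Set X}
    (hK : IsCompact K) {l M r : ℝ} (hl : 0 < l) (hM : 0 < M)
    (h : ∀ (F : Finset ℕ) (U : ℕ → Set X) (D : ℕ → ℝ), K ⊆ ⋃ n ∈ F, U n →
      (∀ n, 0 < D n ∧ D n < r) → (∀ n, ∀ x ∈ U n, ∀ y ∈ U n, dist x y ≤ D n) →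
      1 ≤ M * ∑ n ∈ F, D n ^ l)
    {b : ℕ → ℝ} (hb0 : ∀ n, 0 < b n) (hbr : ∀ n, b n ≤ r / 4)
    (hb : ∀ F : Finset ℕ, ∑ n ∈ F, b n ^ l ≤ (2 * 2 ^ l * M)⁻¹)
    {t : ℕ → Set X} (ht : K ⊆ ⋃ n, t n) (hdiam : ∀ n, ediam (t n) ≤ ENNReal.ofReal (r / 4)) :
    ENNReal.ofReal (2 * 2 ^ l * M)⁻¹ ≤ ∑' n, ⨆ _ : (t n).Nonempty, ediam (t n) ^ l := by
  have htb (n : ℕ) : IsBounded (t n) :=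
    isBounded_iff_ediam_ne_top.2 (ne_top_of_le_ne_top ENNReal.ofReal_ne_top (hdiam n))
  have hta (n : ℕ) : diam (t n) ≤ r / 4 :=
    ENNReal.toReal_le_of_le_ofReal ((hb0 n).le.trans (hbr n)) (hdiam n)
  obtain ⟨F, hF⟩ := hK.elim_finite_subcover (fun n ↦ thickening (b n / 2) (t n))
    (fun n ↦ isOpen_thickening)
    (ht.trans (iUnion_mono fun n ↦ self_subset_thickening (half_pos (hb0 n)) _))
  have hcover := h F _ (fun n ↦ 2 * max (diam (t n)) (b n)) hF
    (fun n ↦ ⟨mul_pos two_pos (lt_max_of_lt_right (hb0 n)),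
      by linarith [max_le (hta n) (hbr n), hb0 n, hbr n]⟩)
    fun n x hx y hy ↦ by
      refine (dist_le_diam_of_mem (htb n).thickening hx hy).trans
        ((diam_thickening_le _ (half_pos (hb0 n)).le).trans ?_)
      linarith [le_max_left (diam (t n)) (b n), le_max_right (diam (t n)) (b n)]
  have hsum : 1 ≤ M * 2 ^ l * (∑ n ∈ F, diam (t n) ^ l + ∑ n ∈ F, b n ^ l) := by
    calc 1 ≤ M * ∑ n ∈ F, (2 * max (diam (t n)) (b n)) ^ l := hcover
      _ ≤ M * ∑ n ∈ F, 2 ^ l * (diam (t n) ^ l + b n ^ l) := by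
          gcongr with n
          rw [Real.mul_rpow zero_le_two (le_max_of_le_right (hb0 n).le)]
          gcongr
          exact max_rpow_le_rpow_add_rpow diam_nonneg (hb0 n).le l
      _ = M * 2 ^ l * (∑ n ∈ F, diam (t n) ^ l + ∑ n ∈ F, b n ^ l) := by
          rw [← Finset.sum_add_distrib, ← Finset.mul_sum]
          ring
  refine le_trans (ENNReal.ofReal_le_ofReal ?_) (ofReal_sum_diam_rpow_le_tsum htb hl F)
  have h2l : 0 < M * 2 ^ l := by positivity
  have : M * 2 ^ l * (2 * 2 ^ l * M)⁻¹ = 1 / 2 := by field_simp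
  nlinarith [hb F]

theorem hausdorffMeasure_pos_of_finite_cover {X : Type*} [MetricSpace X] [MeasurableSpace X]
    [BorelSpace X] {K : Set X} (hK : IsCompact K) {l M r : ℝ} (hl : 0 < l) (hM : 0 < M)
    (hr : 0 < r)
    (h : ∀ (F : Finset ℕ) (U : ℕ → Set X) (D : ℕ → ℝ), K ⊆ ⋃ n ∈ F, U n →
      (∀ n, 0 < D n ∧ D n < r) → (∀ n, ∀ x ∈ U n, ∀ y ∈ U n, dist x y ≤ D n) →
      1 ≤ M * ∑ n ∈ F, D n ^ l) :
    0 < μH[l] K := by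
  have hη : 0 < (2 * 2 ^ l * M)⁻¹ := by positivity
  obtain ⟨e, he0, he⟩ := (countable_univ (α := ℕ)).exists_pos_forall_sum_le
    (lt_min (by positivity : 0 < (r / 4) ^ l) hη)
  have hb0 (n : ℕ) : 0 < e n ^ l⁻¹ := Real.rpow_pos_of_pos (he0 n) _
  have hbl (n : ℕ) : (e n ^ l⁻¹) ^ l = e n := Real.rpow_inv_rpow (he0 n).le hl.ne'
  have hbr (n : ℕ) : e n ^ l⁻¹ ≤ r / 4 := by
    rw [← Real.rpow_le_rpow_iff (hb0 n).le (by positivity) hl, hbl]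
    simpa using (he {n} (subset_univ _)).trans (min_le_left _ _)
  have hb (F : Finset ℕ) : ∑ n ∈ F, (e n ^ l⁻¹) ^ l ≤ (2 * 2 ^ l * M)⁻¹ := by
    simpa only [hbl] using (he F (subset_univ _)).trans (min_le_right _ _)
  rw [Measure.hausdorffMeasure_apply]
  exact (ENNReal.ofReal_pos.2 hη).trans_le <| le_iSup₂_of_le (ENNReal.ofReal (r / 4))
    (by simpa using hr) <| le_iInf₂ fun t ht ↦ le_iInf fun hdiam ↦
      le_tsum_ediam_rpow_of_finite_cover hK hl hM h hb0 hbr hb ht hdiam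

lemma sum_radius_le_of_pairwiseDisjoint_ball {κ : Type*} {T : Finset κ} {x s : κ → ℝ} {p r : ℝ}
    (hdisj : (T : Set κ).PairwiseDisjoint fun k ↦ ball (x k) (s k))
    (hsub : ∀ k ∈ T, ball (x k) (s k) ⊆ closedBall p r) (hs : ∀ k ∈ T, 0 ≤ s k) (hr : 0 ≤ r) :
    ∑ k ∈ T, s k ≤ r := by
  have h := measureReal_mono (μ := volume) (iUnion₂_subset hsub) measure_closedBall_lt_top.ne
  rw [measureReal_biUnion_finset hdisj fun _ _ ↦ measurableSet_ball,
    Real.volume_real_closedBall hr, Finset.sum_congr rfl fun k hk ↦ Real.volume_real_ball (hs k hk),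
    ← Finset.mul_sum] at h
  linarith

lemma sum_biUnion_le_sum_of_nonneg {α κ : Type*} [DecidableEq α] (F : Finset κ)
    (A : κ → Finset α) {f : α → ℝ} (hf : ∀ a, 0 ≤ f a) :
    ∑ a ∈ F.biUnion A, f a ≤ ∑ k ∈ F, ∑ a ∈ A k, f a := by
  rw [← Finset.sup_eq_biUnion]
  refine Finset.apply_sup_le_sum (f := fun S ↦ ∑ a ∈ S, f a) Finset.sum_empty (fun {s t} ↦ ?_) F
  have := Finset.sum_union_inter (s₁ := s) (s₂ := t) (f := f)
  have := Finset.sum_nonneg fun a (_ : a ∈ s ∩ t) ↦ hf a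
  simp only [Finset.sup_eq_union]
  linarith

lemma exists_pos_rpow_add_rpow_eq_one {a b : ℝ} (ha : a ∈ Ioo (0 : ℝ) 1) (hb : b ∈ Ioo (0 : ℝ) 1) :
    ∃ l : ℝ, 0 < l ∧ a ^ l + b ^ l = 1 := by
  have hcont : Continuous fun l : ℝ ↦ a ^ l + b ^ l :=
    (Real.continuous_const_rpow ha.1.ne').add (Real.continuous_const_rpow hb.1.ne')
  have hlim : Tendsto (fun l : ℝ ↦ a ^ l + b ^ l) atTop (𝓝 0) := by
    simpa using (tendsto_rpow_atTop_of_base_lt_one a (by linarith [ha.1]) ha.2).add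
      (tendsto_rpow_atTop_of_base_lt_one b (by linarith [hb.1]) hb.2)
  obtain ⟨T, hT1, hT0⟩ :=
    ((hlim.eventually (gt_mem_nhds one_pos)).and (eventually_ge_atTop 0)).exists
  obtain ⟨l, hl, hl1⟩ := intermediate_value_Icc' hT0 hcont.continuousOn ⟨hT1.le, by norm_num⟩
  refine ⟨l, hl.1.lt_of_ne ?_, hl1⟩
  rintro rfl
  norm_num at hl1

namespace SimilarityIFS

variable {ι : Type*} (ρ c : ι → ℝ)

def sim (i : ι) (x : ℝ) : ℝ := ρ i * x + c i

def wordMap : List ι → ℝ → ℝ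
  | [], x => x
  | i :: w, x => sim ρ c i (wordMap w x)

def ratio (w : List ι) : ℝ := (w.map ρ).prod

@[simp] lemma ratio_nil : ratio ρ [] = 1 := rfl

@[simp] lemma ratio_cons (i : ι) (w : List ι) : ratio ρ (i :: w) = ρ i * ratio ρ w := by
  simp [ratio]

@[simp] lemma ratio_append (u v : List ι) : ratio ρ (u ++ v) = ratio ρ u * ratio ρ v := by
  simp [ratio]

@[simp] lemma wordMap_nil (x : ℝ) : wordMap ρ c [] x = x := rfl

@[simp] lemma wordMap_cons (i : ι) (w : List ι) (x : ℝ) :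
    wordMap ρ c (i :: w) x = sim ρ c i (wordMap ρ c w x) := rfl

lemma wordMap_append (u v : List ι) (x : ℝ) :
    wordMap ρ c (u ++ v) x = wordMap ρ c u (wordMap ρ c v x) := by
  induction u with
  | nil => rfl
  | cons i u ih => simp [ih]

variable {ρ c}

lemma ratio_pos (hρ : ∀ i, 0 < ρ i) (w : List ι) : 0 < ratio ρ w :=
  List.prod_pos fun _ ha ↦ by
    obtain ⟨i, -, rfl⟩ := List.mem_map.1 ha
    exact hρ i

lemma ratio_le_pow_length {m : ℝ} (hρ : ∀ i, 0 ≤ ρ i) (hm : ∀ i, ρ i ≤ m) (w : List ι) :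
    ratio ρ w ≤ m ^ w.length := by
  induction w with
  | nil => simp
  | cons i w ih =>
    rw [ratio_cons, List.length_cons, pow_succ']
    exact mul_le_mul (hm i) ih (List.prod_nonneg fun _ ha ↦ by
      obtain ⟨j, -, rfl⟩ := List.mem_map.1 ha; exact hρ j) ((hρ i).trans (hm i))

lemma exists_ratio_le_pow_length [Finite ι] (hρ : ∀ i, 0 ≤ ρ i) (hρ1 : ∀ i, ρ i < 1) :
    ∃ m, 0 ≤ m ∧ m < 1 ∧ ∀ w : List ι, ratio ρ w ≤ m ^ w.length := by
  rcases isEmpty_or_nonempty ι with hι | hι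
  · exact ⟨0, le_rfl, zero_lt_one, ratio_le_pow_length hρ fun i ↦ isEmptyElim i⟩
  · obtain ⟨i₀, hi₀⟩ := Finite.exists_max ρ
    exact ⟨ρ i₀, hρ i₀, hρ1 i₀, ratio_le_pow_length hρ hi₀⟩

lemma ratio_le_one (hρ : ∀ i, 0 ≤ ρ i) (hρ1 : ∀ i, ρ i ≤ 1) (w : List ι) : ratio ρ w ≤ 1 := by
  simpa using ratio_le_pow_length hρ hρ1 w

lemma ratio_le_of_prefix (hρ : ∀ i, 0 < ρ i) (hρ1 : ∀ i, ρ i ≤ 1) {u v : List ι}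
    (h : u <+: v) : ratio ρ v ≤ ratio ρ u := by
  obtain ⟨t, rfl⟩ := h
  rw [ratio_append]
  exact mul_le_of_le_one_right (ratio_pos hρ u).le (ratio_le_one (fun i ↦ (hρ i).le) hρ1 t)

lemma wordMap_sub (w : List ι) (x y : ℝ) :
    wordMap ρ c w x - wordMap ρ c w y = ratio ρ w * (x - y) := by
  induction w with
  | nil => simp
  | cons i w ih => simp only [wordMap_cons, sim, ratio_cons]; linear_combination ρ i * ih

lemma dist_wordMap (hρ : ∀ i, 0 < ρ i) (w : List ι) (x y : ℝ) :
    dist (wordMap ρ c w x) (wordMap ρ c w y) = ratio ρ w * dist x y := by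
  rw [Real.dist_eq, Real.dist_eq, wordMap_sub, abs_mul, abs_of_pos (ratio_pos hρ w)]

lemma ball_subset_image_wordMap (hρ : ∀ i, 0 < ρ i) {V : Set ℝ} {x : ℝ} {ε : ℝ}
    (hV : ball x ε ⊆ V) (w : List ι) :
    ball (wordMap ρ c w x) (ratio ρ w * ε) ⊆ wordMap ρ c w '' V := by
  intro y hy
  have hr := ratio_pos hρ w
  set z := x + (y - wordMap ρ c w x) / ratio ρ w
  have hz : wordMap ρ c w z = y := by
    have := wordMap_sub (ρ := ρ) (c := c) w z x
    rw [show z - x = (y - wordMap ρ c w x) / ratio ρ w by ring, mul_div_cancel₀ _ hr.ne'] at this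
    linarith
  refine ⟨z, hV ?_, hz⟩
  rw [mem_ball, ← mul_lt_mul_iff_right₀ hr, ← dist_wordMap hρ, hz]
  exact hy

lemma mapsTo_wordMap {S : Set ℝ} (h : ∀ i, MapsTo (sim ρ c i) S S) (w : List ι) :
    MapsTo (wordMap ρ c w) S S := by
  induction w with
  | nil => exact mapsTo_id S
  | cons i w ih => exact (h i).comp ih

lemma subset_iUnion_image_wordMap {K : Set ℝ} (h : K ⊆ ⋃ i, sim ρ c i '' K) (n : ℕ) :
    K ⊆ ⋃ u : Fin n → ι, wordMap ρ c (List.ofFn u) '' K := by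
  induction n with
  | zero => exact fun x hx ↦ mem_iUnion.2 ⟨Fin.elim0, x, hx, by simp⟩
  | succ n ih =>
    intro x hx
    obtain ⟨i, y, hy, rfl⟩ : ∃ i, ∃ y ∈ K, sim ρ c i y = x := by simpa using h hx
    obtain ⟨u, z, hz, rfl⟩ := mem_iUnion.1 (ih hy)
    exact mem_iUnion.2 ⟨Fin.cons i u, z, hz, by simp [List.ofFn_succ]⟩

lemma sim_injective (hρ : ∀ i, 0 < ρ i) (i : ι) : Injective (sim ρ c i) :=
  fun _ _ h ↦ mul_left_cancel₀ (hρ i).ne' (add_right_cancel h)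

lemma image_wordMap_cons (i : ι) (w : List ι) (S : Set ℝ) :
    wordMap ρ c (i :: w) '' S = sim ρ c i '' (wordMap ρ c w '' S) := by
  rw [image_image]; rfl

lemma disjoint_image_wordMap (hρ : ∀ i, 0 < ρ i) {V : Set ℝ} (hsub : ∀ i, MapsTo (sim ρ c i) V V)
    (hdisj : Pairwise (Disjoint on fun i ↦ sim ρ c i '' V)) :
    ∀ {w₁ w₂ : List ι}, ¬ w₁ <+: w₂ → ¬ w₂ <+: w₁ →
      Disjoint (wordMap ρ c w₁ '' V) (wordMap ρ c w₂ '' V)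
  | [], _, h, _ | _, [], _, h => absurd List.nil_prefix h
  | i :: u, j :: v, h₁, h₂ => by
    rw [image_wordMap_cons, image_wordMap_cons]
    by_cases hij : i = j
    · subst hij
      rw [disjoint_image_iff (sim_injective hρ i)]
      exact disjoint_image_wordMap hρ hsub hdisj (by simpa using h₁) (by simpa using h₂)
    · exact (hdisj hij).mono (image_mono (mapsTo_wordMap hsub u).image_subset)
        (image_mono (mapsTo_wordMap hsub v).image_subset)

-- The scale-`d` partition of the coding space: an antichain of words through which every word
-- of ratio at most `d` passes.
variable (ρ) in
def cut (d : ℝ) : Set (List ι) :=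
  {w | ∃ w' i, w = w' ++ [i] ∧ ratio ρ w ≤ d ∧ d < ratio ρ w'}

lemma exists_prefix_mem_cut {d : ℝ} (hd : d < 1) {u : List ι} (hu : ratio ρ u ≤ d) :
    ∃ w ∈ cut ρ d, w <+: u := by
  induction u using List.reverseRecOn with
  | nil => exact absurd hu (by simpa using hd)
  | append_singleton u i ih =>
    by_cases h : ratio ρ u ≤ d
    · obtain ⟨w, hw, hwu⟩ := ih h
      exact ⟨w, hw, hwu.trans (List.prefix_append _ _)⟩
    · exact ⟨u ++ [i], ⟨u, i, rfl, hu, not_le.1 h⟩, List.prefix_refl _⟩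

lemma not_prefix_of_mem_cut (hρ : ∀ i, 0 < ρ i) (hρ1 : ∀ i, ρ i ≤ 1) {d : ℝ} {w₁ w₂ : List ι}
    (h₁ : w₁ ∈ cut ρ d) (h₂ : w₂ ∈ cut ρ d) (hne : w₁ ≠ w₂) : ¬ w₁ <+: w₂ := by
  obtain ⟨-, -, -, hw₁, -⟩ := h₁
  obtain ⟨w₂', j, rfl, -, hw₂'⟩ := h₂
  rw [List.prefix_concat_iff]
  rintro (rfl | h)
  · exact hne rfl
  · exact (ratio_le_of_prefix hρ hρ1 h).not_gt (hw₁.trans_lt hw₂')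

lemma cut_finite [Finite ι] (hρ : ∀ i, 0 ≤ ρ i) (hρ1 : ∀ i, ρ i < 1) {d : ℝ} (hd : 0 < d) :
    (cut ρ d).Finite := by
  obtain ⟨m, hm0, hm1, hm⟩ := exists_ratio_le_pow_length hρ hρ1
  obtain ⟨N, hN⟩ := exists_pow_lt_of_lt_one hd hm1
  refine (List.finite_length_le ι (N + 1)).subset ?_
  rintro _ ⟨w', i, rfl, -, hw'⟩
  have : w'.length < N := by
    by_contra! h
    exact ((hm w').trans (pow_le_pow_of_le_one hm0 hm1.le h)).not_gt (hN.trans hw')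
  show (w' ++ [i]).length ≤ N + 1
  simp only [List.length_append, List.length_singleton]
  omega

lemma mul_lt_ratio_of_mem_cut (hρ : ∀ i, 0 < ρ i) {m : ℝ} (hm : ∀ i, m ≤ ρ i) {d : ℝ}
    (hd : 0 ≤ d) {w : List ι} (hw : w ∈ cut ρ d) : m * d < ratio ρ w := by
  obtain ⟨w', i, rfl, -, hw'⟩ := hw
  rw [ratio_append, ratio_cons, ratio_nil, mul_one, mul_comm]
  calc d * m ≤ d * ρ i := mul_le_mul_of_nonneg_left (hm i) hd
    _ < ratio ρ w' * ρ i := mul_lt_mul_of_pos_right hw' (hρ i)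

lemma ratio_le_of_mem_cut {d : ℝ} {w : List ι} (hw : w ∈ cut ρ d) : ratio ρ w ≤ d := by
  obtain ⟨w', i, rfl, h, -⟩ := hw
  exact h

lemma sum_filter_head_eq_mul_sum_preimage_cons [DecidableEq ι] (hρ : ∀ i, 0 < ρ i) (l : ℝ)
    (S : Finset (List ι)) (i : ι) :
    ∑ w ∈ S with w.head? = some i, ratio ρ w ^ l =
      ρ i ^ l * ∑ v ∈ S.preimage (List.cons i) List.cons_injective.injOn, ratio ρ v ^ l := by
  classical
  simp only [Finset.mul_sum, ← Real.mul_rpow (hρ i).le (ratio_pos hρ _).le, ← ratio_cons]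
  refine ((Finset.sum_preimage' (List.cons i) S _ fun w ↦ ratio ρ w ^ l).trans ?_).symm
  congr 1
  ext w
  simp [List.head?_eq_some_iff, eq_comm]

-- `ratio ρ w ^ l` is the natural mass of the cylinder of words extending `w`.
lemma one_le_sum_ratio_rpow [Fintype ι] (hρ : ∀ i, 0 < ρ i) {l : ℝ} (hl : ∑ i, ρ i ^ l = 1) :
    ∀ (N : ℕ) (S : Finset (List ι)), (∀ u : List ι, u.length = N → ∃ w ∈ S, w <+: u) →
      1 ≤ ∑ w ∈ S, ratio ρ w ^ l := by
  classical
  have hnn (w : List ι) : 0 ≤ ratio ρ w ^ l := Real.rpow_nonneg (ratio_pos hρ w).le l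
  have of_nil_mem (S : Finset (List ι)) (hS : [] ∈ S) : 1 ≤ ∑ w ∈ S, ratio ρ w ^ l := by
    simpa using Finset.single_le_sum (fun w _ ↦ hnn w) hS
  intro N
  induction N with
  | zero =>
    intro S h
    obtain ⟨w, hw, hpre⟩ := h [] rfl
    exact of_nil_mem S (List.prefix_nil.1 hpre ▸ hw)
  | succ N ih =>
    intro S h
    by_cases hnil : [] ∈ S
    · exact of_nil_mem S hnil
    have hcons (i : ι) :
        1 ≤ ∑ v ∈ S.preimage (List.cons i) List.cons_injective.injOn, ratio ρ v ^ l := by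
      refine ih _ fun u hu ↦ ?_
      obtain ⟨w, hw, hpre⟩ := h (i :: u) (by simp [hu])
      cases w with
      | nil => exact absurd hw hnil
      | cons j v =>
        obtain ⟨rfl, hv⟩ := List.cons_prefix_cons.1 hpre
        exact ⟨v, by simpa using hw, hv⟩
    calc 1 = ∑ i, ρ i ^ l := hl.symm
      _ ≤ ∑ i, ∑ w ∈ S with w.head? = some i, ratio ρ w ^ l := by
          gcongr with i
          rw [sum_filter_head_eq_mul_sum_preimage_cons hρ]
          exact le_mul_of_one_le_right (Real.rpow_nonneg (hρ i).le l) (hcons i)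
      _ ≤ ∑ o : Option ι, ∑ w ∈ S with w.head? = o, ratio ρ w ^ l := by
          rw [Fintype.sum_option]
          exact le_add_of_nonneg_left (Finset.sum_nonneg fun w _ ↦ hnn w)
      _ = ∑ w ∈ S, ratio ρ w ^ l := Finset.sum_fiberwise S List.head? _

lemma card_mul_le_of_mem_cut (hρ : ∀ i, 0 < ρ i) (hρ1 : ∀ i, ρ i ≤ 1) {V : Set ℝ}
    (hsub : ∀ i, MapsTo (sim ρ c i) V V) (hdisj : Pairwise (Disjoint on fun i ↦ sim ρ c i '' V))
    {x₀ ε : ℝ} (hε : 0 < ε) (hball : ball x₀ ε ⊆ V) {K : Set ℝ} {R : ℝ} (hR : 0 ≤ R)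
    (hKR : K ⊆ closedBall x₀ R) {m : ℝ} (hm : ∀ i, m ≤ ρ i) {d : ℝ} (hd : 0 < d) {U : Set ℝ}
    (hU : ∀ x ∈ U, ∀ y ∈ U, dist x y ≤ d) {T : Finset (List ι)}
    (hT : ∀ w ∈ T, w ∈ cut ρ d ∧ (wordMap ρ c w '' K ∩ U).Nonempty) :
    T.card * (m * d * ε) ≤ (ε + R + 1) * d := by
  rcases T.eq_empty_or_nonempty with rfl | ⟨w₀, hw₀⟩
  · simp only [Finset.card_empty, Nat.cast_zero, zero_mul]
    positivity
  obtain ⟨-, p₀, -, hp₀⟩ := hT w₀ hw₀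
  have hdisjB : (T : Set (List ι)).PairwiseDisjoint
      fun w ↦ ball (wordMap ρ c w x₀) (ratio ρ w * ε) := by
    intro w₁ h₁ w₂ h₂ hne
    have hc₁ := (hT w₁ h₁).1
    have hc₂ := (hT w₂ h₂).1
    exact (disjoint_image_wordMap hρ hsub hdisj (not_prefix_of_mem_cut hρ hρ1 hc₁ hc₂ hne)
      (not_prefix_of_mem_cut hρ hρ1 hc₂ hc₁ hne.symm)).mono
      (ball_subset_image_wordMap hρ hball w₁) (ball_subset_image_wordMap hρ hball w₂)
  have hsubB : ∀ w ∈ T,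
      ball (wordMap ρ c w x₀) (ratio ρ w * ε) ⊆ closedBall p₀ ((ε + R + 1) * d) := by
    intro w hw q hq
    obtain ⟨hcut, _, ⟨k, hk, rfl⟩, hkU⟩ := hT w hw
    have hwd := ratio_le_of_mem_cut hcut
    have hr := ratio_pos hρ w
    rw [mem_closedBall]
    calc dist q p₀ ≤ dist q (wordMap ρ c w x₀) + dist (wordMap ρ c w x₀) (wordMap ρ c w k)
          + dist (wordMap ρ c w k) p₀ := dist_triangle4 ..
      _ ≤ ratio ρ w * ε + ratio ρ w * R + d := by
          rw [dist_wordMap hρ, dist_comm x₀]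
          gcongr
          exacts [(mem_ball.1 hq).le, mem_closedBall.1 (hKR hk), hU _ hkU _ hp₀]
      _ ≤ d * ε + d * R + d := by gcongr
      _ = (ε + R + 1) * d := by ring
  calc T.card * (m * d * ε) ≤ ∑ w ∈ T, ratio ρ w * ε := by
        simpa using Finset.card_nsmul_le_sum T _ _ fun w hw ↦
          mul_le_mul_of_nonneg_right (mul_lt_ratio_of_mem_cut hρ hm hd.le (hT w hw).1).le hε.le
    _ ≤ (ε + R + 1) * d := sum_radius_le_of_pairwiseDisjoint_ball hdisjB hsubB
        (fun w _ ↦ by have := ratio_pos hρ w; positivity) (by positivity)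

lemma sum_ratio_rpow_le_of_mem_cut (hρ : ∀ i, 0 < ρ i) (hρ1 : ∀ i, ρ i ≤ 1) {V : Set ℝ}
    (hsub : ∀ i, MapsTo (sim ρ c i) V V) (hdisj : Pairwise (Disjoint on fun i ↦ sim ρ c i '' V))
    {x₀ ε : ℝ} (hε : 0 < ε) (hball : ball x₀ ε ⊆ V) {K : Set ℝ} {R : ℝ} (hR : 0 ≤ R)
    (hKR : K ⊆ closedBall x₀ R) {m : ℝ} (hm0 : 0 < m) (hm : ∀ i, m ≤ ρ i) {d : ℝ} (hd : 0 < d)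
    {U : Set ℝ} (hU : ∀ x ∈ U, ∀ y ∈ U, dist x y ≤ d) {T : Finset (List ι)}
    (hT : ∀ w ∈ T, w ∈ cut ρ d ∧ (wordMap ρ c w '' K ∩ U).Nonempty) {l : ℝ} (hl : 0 ≤ l) :
    ∑ w ∈ T, ratio ρ w ^ l ≤ (ε + R + 1) / (m * ε) * d ^ l := by
  have hcard : (T.card : ℝ) ≤ (ε + R + 1) / (m * ε) := by
    rw [le_div_iff₀ (by positivity)]
    have := card_mul_le_of_mem_cut hρ hρ1 hsub hdisj hε hball hR hKR hm hd hU hT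
    nlinarith
  calc ∑ w ∈ T, ratio ρ w ^ l ≤ T.card * d ^ l := by
        simpa using Finset.sum_le_card_nsmul T _ (d ^ l) fun w hw ↦
          Real.rpow_le_rpow (ratio_pos hρ w).le (ratio_le_of_mem_cut (hT w hw).1) hl
    _ ≤ (ε + R + 1) / (m * ε) * d ^ l := by gcongr

-- The pieces at scale `D n` meeting `U n` catch every long enough word, so they carry mass at
-- least one, while each `U n` meets only boundedly many of them.
theorem one_le_mul_sum_rpow_of_finite_cover [Fintype ι] (hρ : ∀ i, 0 < ρ i) (hρ1 : ∀ i, ρ i < 1)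
    {V : Set ℝ} (hsub : ∀ i, MapsTo (sim ρ c i) V V)
    (hdisj : Pairwise (Disjoint on fun i ↦ sim ρ c i '' V)) {x₀ ε : ℝ} (hε : 0 < ε)
    (hball : ball x₀ ε ⊆ V) {K : Set ℝ} (hKne : K.Nonempty) (hinv : ∀ i, MapsTo (sim ρ c i) K K)
    {R : ℝ} (hR : 0 ≤ R) (hKR : K ⊆ closedBall x₀ R) {m : ℝ} (hm0 : 0 < m) (hm : ∀ i, m ≤ ρ i)
    {l : ℝ} (hl0 : 0 ≤ l) (hl : ∑ i, ρ i ^ l = 1) (F : Finset ℕ) (U : ℕ → Set ℝ) (D : ℕ → ℝ)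
    (hKU : K ⊆ ⋃ n ∈ F, U n) (hD : ∀ n, 0 < D n ∧ D n < 1)
    (hU : ∀ n, ∀ x ∈ U n, ∀ y ∈ U n, dist x y ≤ D n) :
    1 ≤ (ε + R + 1) / (m * ε) * ∑ n ∈ F, D n ^ l := by
  classical
  obtain ⟨k₀, hk₀⟩ := hKne
  obtain ⟨m', hm'0, hm'1, hm'⟩ := exists_ratio_le_pow_length (fun i ↦ (hρ i).le) hρ1
  obtain ⟨N, hN⟩ : ∃ N, ∀ n ∈ F, m' ^ N < D n :=
    ((Filter.eventually_all_finset F).2 fun n _ ↦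
      (tendsto_pow_atTop_nhds_zero_of_lt_one hm'0 hm'1).eventually (gt_mem_nhds (hD n).1)).exists
  let A (n : ℕ) : Finset (List ι) := {w ∈ (cut_finite (fun i ↦ (hρ i).le) hρ1 (hD n).1).toFinset |
    (wordMap ρ c w '' K ∩ U n).Nonempty}
  have hcover : ∀ u : List ι, u.length = N → ∃ w ∈ F.biUnion A, w <+: u := by
    intro u hu
    obtain ⟨n, hn, hxU⟩ := mem_iUnion₂.1 (hKU (mapsTo_wordMap hinv u hk₀))
    obtain ⟨w, hw, v, rfl⟩ :=
      exists_prefix_mem_cut (hD n).2 (((hm' u).trans_eq (by rw [hu])).trans (hN n hn).le)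
    refine ⟨w, Finset.mem_biUnion.2 ⟨n, hn, ?_⟩, v, rfl⟩
    simp only [A, Finset.mem_filter, Set.Finite.mem_toFinset]
    exact ⟨hw, _, ⟨_, mapsTo_wordMap hinv v hk₀, (wordMap_append ..).symm⟩, hxU⟩
  calc 1 ≤ ∑ w ∈ F.biUnion A, ratio ρ w ^ l := one_le_sum_ratio_rpow hρ hl N _ hcover
    _ ≤ ∑ n ∈ F, ∑ w ∈ A n, ratio ρ w ^ l :=
        sum_biUnion_le_sum_of_nonneg F A fun w ↦ Real.rpow_nonneg (ratio_pos hρ w).le l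
    _ ≤ ∑ n ∈ F, (ε + R + 1) / (m * ε) * D n ^ l := by
        refine Finset.sum_le_sum fun n _ ↦ sum_ratio_rpow_le_of_mem_cut hρ (fun i ↦ (hρ1 i).le)
          hsub hdisj hε hball hR hKR hm0 hm (hD n).1 (hU n) (fun w hw ↦ ?_) hl0
        simp only [A, Finset.mem_filter, Set.Finite.mem_toFinset] at hw
        exact hw
    _ = (ε + R + 1) / (m * ε) * ∑ n ∈ F, D n ^ l := (Finset.mul_sum ..).symm

lemma lipschitzWith_wordMap (hρ : ∀ i, 0 < ρ i) (w : List ι) :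
    LipschitzWith (ratio ρ w).toNNReal (wordMap ρ c w) :=
  LipschitzWith.of_dist_le_mul fun x y ↦ by
    rw [dist_wordMap hρ, Real.coe_toNNReal _ (ratio_pos hρ w).le]

lemma sum_ratio_ofFn_rpow [Fintype ι] (hρ : ∀ i, 0 ≤ ρ i) {l : ℝ} (hl : ∑ i, ρ i ^ l = 1)
    (n : ℕ) : ∑ u : Fin n → ι, ratio ρ (List.ofFn u) ^ l = 1 := by
  have h (u : Fin n → ι) : ratio ρ (List.ofFn u) ^ l = ∏ k, ρ (u k) ^ l := by
    rw [ratio, List.map_ofFn, List.prod_ofFn, Real.finsetProd_rpow _ _ fun k _ ↦ hρ _]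
    rfl
  simp_rw [h]
  rw [← one_pow n, ← hl, Fintype.sum_pow]

theorem hausdorffMeasure_le_ediam_rpow [Fintype ι] (hρ : ∀ i, 0 < ρ i) (hρ1 : ∀ i, ρ i < 1)
    {K : Set ℝ} (hKb : IsBounded K) (hcov : K ⊆ ⋃ i, sim ρ c i '' K) {l : ℝ} (hl0 : 0 ≤ l)
    (hl : ∑ i, ρ i ^ l = 1) :
    μH[l] K ≤ ediam K ^ l := by
  obtain ⟨m, hm0, hm1, hm⟩ := exists_ratio_le_pow_length (fun i ↦ (hρ i).le) hρ1
  have hdiam (n : ℕ) (u : Fin n → ι) :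
      ediam (wordMap ρ c (List.ofFn u) '' K) ≤ ENNReal.ofReal (ratio ρ (List.ofFn u)) * ediam K :=
    (lipschitzWith_wordMap hρ _).ediam_image_le K
  have hlim : Tendsto (fun n : ℕ ↦ ENNReal.ofReal (m ^ n) * ediam K) atTop (𝓝 0) := by
    simpa using ENNReal.Tendsto.mul_const
      (ENNReal.tendsto_ofReal (tendsto_pow_atTop_nhds_zero_of_lt_one hm0 hm1))
      (Or.inr hKb.ediam_ne_top)
  refine (Measure.hausdorffMeasure_le_liminf_sum l K _ hlim
    (fun n u ↦ wordMap ρ c (List.ofFn u) '' K)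
    (Eventually.of_forall fun n u ↦ (hdiam n u).trans ?_)
    (Eventually.of_forall (subset_iUnion_image_wordMap hcov))).trans ?_
  · gcongr
    simpa using hm (List.ofFn u)
  refine liminf_le_of_frequently_le' (Frequently.of_forall fun n ↦ ?_)
  calc ∑ u : Fin n → ι, ediam (wordMap ρ c (List.ofFn u) '' K) ^ l
      ≤ ∑ u : Fin n → ι, ENNReal.ofReal (ratio ρ (List.ofFn u) ^ l) * ediam K ^ l := by
        gcongr with u
        rw [← ENNReal.ofReal_rpow_of_nonneg (ratio_pos hρ _).le hl0,
          ← ENNReal.mul_rpow_of_nonneg _ _ hl0]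
        gcongr
        exact hdiam n u
    _ = ediam K ^ l := by
        rw [← Finset.sum_mul, ← ENNReal.ofReal_sum_of_nonneg
          fun u _ ↦ Real.rpow_nonneg (ratio_pos hρ _).le l,
          sum_ratio_ofFn_rpow (fun i ↦ (hρ i).le) hl n, ENNReal.ofReal_one, one_mul]

theorem hausdorffMeasure_pos [Fintype ι] (hρ : ∀ i, 0 < ρ i) (hρ1 : ∀ i, ρ i < 1) {K : Set ℝ}
    (hKc : IsCompact K) (hKne : K.Nonempty) (hinv : ∀ i, MapsTo (sim ρ c i) K K) {V : Set ℝ}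
    (hV : IsOpen V) (hVne : V.Nonempty) (hsub : ∀ i, MapsTo (sim ρ c i) V V)
    (hdisj : Pairwise (Disjoint on fun i ↦ sim ρ c i '' V)) {l : ℝ} (hl0 : 0 < l)
    (hl : ∑ i, ρ i ^ l = 1) :
    0 < μH[l] K := by
  obtain ⟨x₀, hx₀⟩ := hVne
  obtain ⟨ε, hε, hball⟩ := Metric.isOpen_iff.1 hV x₀ hx₀
  obtain ⟨R, hR, hKR⟩ := hKc.isBounded.subset_closedBall_lt 0 x₀
  obtain ⟨m, hm0, hm⟩ : ∃ m, 0 < m ∧ ∀ i, m ≤ ρ i := by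
    rcases isEmpty_or_nonempty ι with hι | hι
    · exact ⟨1, one_pos, isEmptyElim⟩
    · obtain ⟨i₀, hi₀⟩ := Finite.exists_min ρ
      exact ⟨ρ i₀, hρ i₀, hi₀⟩
  exact hausdorffMeasure_pos_of_finite_cover hKc hl0 (by positivity) one_pos
    fun F U D hKU hD hU ↦ one_le_mul_sum_rpow_of_finite_cover hρ hρ1 hsub hdisj hε hball hKne
      hinv hR.le hKR hm0 hm hl0.le hl F U D hKU hD hU

theorem dimH_eq [Fintype ι] (hρ : ∀ i, 0 < ρ i) (hρ1 : ∀ i, ρ i < 1) {K : Set ℝ}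
    (hKc : IsCompact K) (hKne : K.Nonempty) (hK : ⋃ i, sim ρ c i '' K = K) {V : Set ℝ}
    (hV : IsOpen V) (hVne : V.Nonempty) (hsub : ∀ i, MapsTo (sim ρ c i) V V)
    (hdisj : Pairwise (Disjoint on fun i ↦ sim ρ c i '' V)) {l : ℝ} (hl0 : 0 < l)
    (hl : ∑ i, ρ i ^ l = 1) :
    dimH K = ENNReal.ofReal l := by
  have hinv (i : ι) : MapsTo (sim ρ c i) K K :=
    mapsTo_iff_image_subset.2 ((subset_iUnion (fun i ↦ sim ρ c i '' K) i).trans hK.le)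
  have hpos := hausdorffMeasure_pos hρ hρ1 hKc hKne hinv hV hVne hsub hdisj hl0 hl
  have hfin := (hausdorffMeasure_le_ediam_rpow hρ hρ1 hKc.isBounded hK.ge hl0.le hl).trans_lt
    (ENNReal.rpow_lt_top_of_nonneg hl0.le hKc.isBounded.ediam_ne_top)
  rw [← Real.coe_toNNReal l hl0.le] at hpos hfin
  exact dimH_of_hausdorffMeasure_ne_zero_ne_top hpos.ne' hfin.ne

end SimilarityIFS

theorem stmt15_general (r0 r1 c0 c1 : ℝ) (h0 : r0 ∈ Set.Ioo (0 : ℝ) 1)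
    (h1 : r1 ∈ Set.Ioo (0 : ℝ) 1) (K : Set ℝ) (hKne : K.Nonempty)
    (hKc : IsCompact K)
    (hK : K = (fun x => r0 * x + c0) '' K ∪ (fun x => r1 * x + c1) '' K)
    (V : Set ℝ) (hV : IsOpen V) (hVne : V.Nonempty)
    (hsub : (fun x => r0 * x + c0) '' V ∪ (fun x => r1 * x + c1) '' V ⊆ V)
    (hdisj : (fun x => r0 * x + c0) '' V ∩ (fun x => r1 * x + c1) '' V = ∅) :
    ∃ lam : ℝ, 0 < lam ∧ r0 ^ lam + r1 ^ lam = 1 ∧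
      dimH K = ENNReal.ofReal lam := by
  obtain ⟨lam, hlam0, hlam⟩ := exists_pos_rpow_add_rpow_eq_one h0 h1
  refine ⟨lam, hlam0, hlam, ?_⟩
  let ρ : Bool → ℝ := fun b ↦ cond b r0 r1
  let c : Bool → ℝ := fun b ↦ cond b c0 c1
  have himage (S : Set ℝ) (b : Bool) : SimilarityIFS.sim ρ c b '' S =
      cond b ((fun x => r0 * x + c0) '' S) ((fun x => r1 * x + c1) '' S) := by
    cases b <;> rfl
  have hunion (S : Set ℝ) : (fun x => r0 * x + c0) '' S ∪ (fun x => r1 * x + c1) '' S =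
      ⋃ b, SimilarityIFS.sim ρ c b '' S := by
    simp_rw [himage, ← union_eq_iUnion]
  rw [hunion] at hK hsub
  refine SimilarityIFS.dimH_eq (fun b ↦ by cases b; exacts [h1.1, h0.1])
    (fun b ↦ by cases b; exacts [h1.2, h0.2]) hKc hKne hK.symm hV hVne
    (fun b ↦ mapsTo_iff_image_subset.2 (iUnion_subset_iff.1 hsub b)) ?_ hlam0
    (by simpa [ρ, add_comm] using hlam)
  simp_rw [himage]
  exact pairwise_disjoint_on_bool.2 (disjoint_iff_inter_eq_empty.2 hdisj)

theorem stmt15 (r0 r1 c0 c1 : ℝ) (h0 : r0 ∈ Set.Ioo (0 : ℝ) 1)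
    (h1 : r1 ∈ Set.Ioo (0 : ℝ) 1) (K : Set ℝ) (hKne : K.Nonempty)
    (hKc : IsCompact K)
    (hK : K = (fun x => r0 * x + c0) '' K ∪ (fun x => r1 * x + c1) '' K)
    (V : Set ℝ) (hV : IsOpen V) (hVne : V.Nonempty) (hVb : Bornology.IsBounded V)
    (hsub : (fun x => r0 * x + c0) '' V ∪ (fun x => r1 * x + c1) '' V ⊆ V)
    (hdisj : (fun x => r0 * x + c0) '' V ∩ (fun x => r1 * x + c1) '' V = ∅) :
    ∃ lam : ℝ, 0 < lam ∧ r0 ^ lam + r1 ^ lam = 1 ∧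
      dimH K = ENNReal.ofReal lam :=
  stmt15_general r0 r1 c0 c1 h0 h1 K hKne hKc hK V hV hVne hsub hdisj
end

section
/- Let $x, y > 1$ be real numbers and let $(n_k)_{k\ge1}$, $(\tilde{n}_\ell)_{\ell\ge1}$ be nondecreasing sequences of nonnegative integers such that $(n_k+1)(\tilde{n}_\ell+1) \ge k\ell$ for all $k, \ell \ge 1$, and suppose $\sum_{k=1}^\infty y^{-k}x^{-n_k} = x - 1$ and $\sum_{\ell=1}^\infty x^{-\ell}y^{-\tilde{n}_\ell} = y - 1$ (both series converging). Then $\Big(1 + \sum_{k=1}^\infty \frac{n_k}{y^k x^{n_k+1}}\Big)\Big(1 + \sum_{\ell=1}^\infty \frac{\tilde{n}_\ell}{x^\ell y^{\tilde{n}_\ell+1}}\Big) > \sum_{k=1}^\infty \frac{k}{y^{k+1}x^{n_k}} \cdot \sum_{\ell=1}^\infty \frac{\ell}{x^{\ell+1}y^{\tilde{n}_\ell}}$. -/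
/-!
Write `a_k = y^{-k} x^{-n_k}` and `b_l = x^{-l} y^{-ñ_l}`. Up to the factor `x y`, the claim is
`(∑ k a_k)(∑ l b_l) < (∑ n_k a_k + x)(∑ ñ_l b_l + y)`. Termwise, `k l ≤ (n_k + 1)(ñ_l + 1)` bounds
the left side by `(∑ (n_k + 1) a_k)(∑ (ñ_l + 1) b_l)`, which by the two hypotheses on the series
equals `(∑ n_k a_k + x - 1)(∑ ñ_l b_l + y - 1)`.
-/

theorem tsum_mul_tsum_le_tsum_mul_tsum {ι κ : Type*} {f F : ι → ℝ} {g G : κ → ℝ}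
    (hf : Summable f) (hg : Summable g) (hF : Summable F) (hG : Summable G)
    (h : ∀ i j, f i * g j ≤ F i * G j) :
    (∑' i, f i) * ∑' j, g j ≤ (∑' i, F i) * ∑' j, G j := by
  rw [← tsum_mul_right, ← tsum_mul_right]
  refine Summable.tsum_le_tsum (fun i => ?_) (hf.mul_right _) (hF.mul_right _)
  rw [← tsum_mul_left, ← tsum_mul_left]
  exact Summable.tsum_le_tsum (h i) (hg.mul_left _) (hG.mul_left _)

/-- `seriesTerm x y n k = y^{-(k+1)} x^{-n_{k+1}}`: the paper's index `k ≥ 1` is `k + 1` here.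
The second series is `seriesTerm y x ñ`. -/
noncomputable def seriesTerm (x y : ℝ) (n : ℕ → ℕ) (k : ℕ) : ℝ := 1 / (y ^ (k + 1) * x ^ n (k + 1))

section seriesTerm

variable {x y : ℝ} (n : ℕ → ℕ)

theorem seriesTerm_nonneg (hx : 0 ≤ x) (hy : 0 ≤ y) (k : ℕ) : 0 ≤ seriesTerm x y n k := by
  unfold seriesTerm
  positivity

theorem seriesTerm_le_inv_pow (hx : 1 ≤ x) (hy : 0 < y) (k : ℕ) :
    seriesTerm x y n k ≤ y⁻¹ ^ (k + 1) := by
  rw [seriesTerm, one_div, inv_pow]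
  exact inv_anti₀ (by positivity) (le_mul_of_one_le_right (by positivity) (one_le_pow₀ hx))

theorem summable_natCast_mul_seriesTerm (hx : 1 < x) (hy : 1 < y) :
    Summable fun k => (n (k + 1) : ℝ) * seriesTerm x y n k := by
  have hgeom : Summable fun k : ℕ => (x - 1)⁻¹ * y⁻¹ ^ (k + 1) :=
    ((summable_nat_add_iff 1).2 <|
      summable_geometric_of_lt_one (by positivity) (inv_lt_one_of_one_lt₀ hy)).mul_left _
  refine Summable.of_nonneg_of_le
    (fun k => mul_nonneg (n _).cast_nonneg' (seriesTerm_nonneg n (by linarith) (by linarith) k))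
    (fun k => ?_) hgeom
  calc (n (k + 1) : ℝ) * seriesTerm x y n k
      ≤ x ^ n (k + 1) / (x - 1) * seriesTerm x y n k :=
        mul_le_mul_of_nonneg_right (Nat.cast_le_pow_div_sub hx _)
          (seriesTerm_nonneg n (by linarith) (by linarith) k)
    _ = (x - 1)⁻¹ * y⁻¹ ^ (k + 1) := by
        have : x ^ n (k + 1) ≠ 0 := by positivity
        rw [seriesTerm, inv_pow]
        field_simp

theorem summable_succ_mul_seriesTerm (hx : 1 ≤ x) (hy : 1 < y) :
    Summable fun k : ℕ => ((k : ℝ) + 1) * seriesTerm x y n k := by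
  have hr : ‖y⁻¹‖ < 1 := by
    rw [norm_inv, Real.norm_of_nonneg (by linarith)]
    exact inv_lt_one_of_one_lt₀ hy
  have hgeom : Summable fun k : ℕ => ((k : ℝ) + 1) * y⁻¹ ^ (k + 1) := by
    refine ((summable_nat_add_iff 1).2
      (summable_pow_mul_geometric_of_norm_lt_one (R := ℝ) 1 hr)).congr fun k => ?_
    push_cast
    ring
  exact Summable.of_nonneg_of_le
    (fun k => mul_nonneg (by positivity) (seriesTerm_nonneg n (by linarith) (by linarith) k))
    (fun k => mul_le_mul_of_nonneg_left (seriesTerm_le_inv_pow n hx (by linarith) k)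
      (by positivity)) hgeom

end seriesTerm

theorem tsum_succ_mul_seriesTerm_mul_le {x y : ℝ} (hx : 1 < x) (hy : 1 < y) {n nt : ℕ → ℕ}
    (hineq : ∀ k l : ℕ, (k + 1) * (l + 1) ≤ (n (k + 1) + 1) * (nt (l + 1) + 1))
    (ha : Summable (seriesTerm x y n)) (hb : Summable (seriesTerm y x nt)) :
    (∑' k : ℕ, ((k : ℝ) + 1) * seriesTerm x y n k) *
        ∑' l : ℕ, ((l : ℝ) + 1) * seriesTerm y x nt l ≤
      (∑' k, (n (k + 1) : ℝ) * seriesTerm x y n k + ∑' k, seriesTerm x y n k) *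
        (∑' l, (nt (l + 1) : ℝ) * seriesTerm y x nt l + ∑' l, seriesTerm y x nt l) := by
  have hNa := summable_natCast_mul_seriesTerm n hx hy
  have hNb := summable_natCast_mul_seriesTerm nt hy hx
  rw [← hNa.tsum_add ha, ← hNb.tsum_add hb]
  refine tsum_mul_tsum_le_tsum_mul_tsum (summable_succ_mul_seriesTerm n hx.le hy)
    (summable_succ_mul_seriesTerm nt hy.le hx) (hNa.add ha) (hNb.add hb) fun k l => ?_
  have hkl : ((k : ℝ) + 1) * (l + 1) ≤ ((n (k + 1) : ℝ) + 1) * (nt (l + 1) + 1) := by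
    exact_mod_cast hineq k l
  have hab : 0 ≤ seriesTerm x y n k * seriesTerm y x nt l :=
    mul_nonneg (seriesTerm_nonneg n (by linarith) (by linarith) k)
      (seriesTerm_nonneg nt (by linarith) (by linarith) l)
  calc ((k : ℝ) + 1) * seriesTerm x y n k * (((l : ℝ) + 1) * seriesTerm y x nt l)
      = ((k : ℝ) + 1) * (l + 1) * (seriesTerm x y n k * seriesTerm y x nt l) := by ring
    _ ≤ ((n (k + 1) : ℝ) + 1) * (nt (l + 1) + 1) *
          (seriesTerm x y n k * seriesTerm y x nt l) := mul_le_mul_of_nonneg_right hkl hab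
    _ = _ := by ring

theorem div_mul_div_lt_one_add_div_mul_one_add_div {x y S T N M : ℝ} (hx : 1 < x) (hy : 1 < y)
    (hN : 0 ≤ N) (hM : 0 ≤ M) (h : S * T ≤ (N + (x - 1)) * (M + (y - 1))) :
    S / y * (T / x) < (1 + N / x) * (1 + M / y) := by
  have hx0 : 0 < x := by linarith
  have hy0 : 0 < y := by linarith
  rw [div_mul_div_comm, one_add_div hx0.ne', one_add_div hy0.ne', div_mul_div_comm, mul_comm y x,
    div_lt_div_iff_of_pos_right (by positivity)]
  nlinarith

theorem stmt17_general (x y : ℝ) (hx : 1 < x) (hy : 1 < y) (n nt : ℕ → ℕ)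
    (hineq : ∀ k l : ℕ, (k + 1) * (l + 1) ≤ (n (k + 1) + 1) * (nt (l + 1) + 1))
    (hsum1 : Summable (fun k : ℕ => 1 / (y ^ (k + 1) * x ^ n (k + 1))))
    (heq1 : ∑' k : ℕ, 1 / (y ^ (k + 1) * x ^ n (k + 1)) = x - 1)
    (hsum2 : Summable (fun l : ℕ => 1 / (x ^ (l + 1) * y ^ nt (l + 1))))
    (heq2 : ∑' l : ℕ, 1 / (x ^ (l + 1) * y ^ nt (l + 1)) = y - 1) :
    Summable (fun k : ℕ => (n (k + 1) : ℝ) / (y ^ (k + 1) * x ^ (n (k + 1) + 1))) ∧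
    Summable (fun l : ℕ => (nt (l + 1) : ℝ) / (x ^ (l + 1) * y ^ (nt (l + 1) + 1))) ∧
    Summable (fun k : ℕ => ((k : ℝ) + 1) / (y ^ (k + 2) * x ^ n (k + 1))) ∧
    Summable (fun l : ℕ => ((l : ℝ) + 1) / (x ^ (l + 2) * y ^ nt (l + 1))) ∧
    (∑' k : ℕ, ((k : ℝ) + 1) / (y ^ (k + 2) * x ^ n (k + 1))) *
        (∑' l : ℕ, ((l : ℝ) + 1) / (x ^ (l + 2) * y ^ nt (l + 1))) <
      (1 + ∑' k : ℕ, (n (k + 1) : ℝ) / (y ^ (k + 1) * x ^ (n (k + 1) + 1))) *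
        (1 + ∑' l : ℕ, (nt (l + 1) : ℝ) / (x ^ (l + 1) * y ^ (nt (l + 1) + 1))) := by
  have eNa : ∀ k : ℕ, (n (k + 1) : ℝ) / (y ^ (k + 1) * x ^ (n (k + 1) + 1)) =
      n (k + 1) * seriesTerm x y n k / x := fun k => by rw [seriesTerm]; ring
  have eNb : ∀ l : ℕ, (nt (l + 1) : ℝ) / (x ^ (l + 1) * y ^ (nt (l + 1) + 1)) =
      nt (l + 1) * seriesTerm y x nt l / y := fun l => by rw [seriesTerm]; ring
  have eSa : ∀ k : ℕ, ((k : ℝ) + 1) / (y ^ (k + 2) * x ^ n (k + 1)) =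
      (k + 1) * seriesTerm x y n k / y := fun k => by rw [seriesTerm]; ring
  have eSb : ∀ l : ℕ, ((l : ℝ) + 1) / (x ^ (l + 2) * y ^ nt (l + 1)) =
      (l + 1) * seriesTerm y x nt l / x := fun l => by rw [seriesTerm]; ring
  refine ⟨((summable_natCast_mul_seriesTerm n hx hy).div_const x).congr fun k => (eNa k).symm,
    ((summable_natCast_mul_seriesTerm nt hy hx).div_const y).congr fun l => (eNb l).symm,
    ((summable_succ_mul_seriesTerm n hx.le hy).div_const y).congr fun k => (eSa k).symm,
    ((summable_succ_mul_seriesTerm nt hy.le hx).div_const x).congr fun l => (eSb l).symm, ?_⟩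
  have hprod := tsum_succ_mul_seriesTerm_mul_le hx hy hineq hsum1 hsum2
  rw [show ∑' k, seriesTerm x y n k = x - 1 from heq1,
    show ∑' l, seriesTerm y x nt l = y - 1 from heq2] at hprod
  simp only [tsum_congr eNa, tsum_congr eNb, tsum_congr eSa, tsum_congr eSb, tsum_div_const]
  refine div_mul_div_lt_one_add_div_mul_one_add_div hx hy (tsum_nonneg fun k => ?_)
    (tsum_nonneg fun l => ?_) hprod
  · exact mul_nonneg (n _).cast_nonneg' (seriesTerm_nonneg n (by linarith) (by linarith) k)
  · exact mul_nonneg (nt _).cast_nonneg' (seriesTerm_nonneg nt (by linarith) (by linarith) l)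

theorem stmt17 (x y : ℝ) (hx : 1 < x) (hy : 1 < y) (n nt : ℕ → ℕ)
    (hmono : ∀ k, n (k + 1) ≤ n (k + 2)) (hmono' : ∀ l, nt (l + 1) ≤ nt (l + 2))
    (hineq : ∀ k l : ℕ, (k + 1) * (l + 1) ≤ (n (k + 1) + 1) * (nt (l + 1) + 1))
    (hsum1 : Summable (fun k : ℕ => 1 / (y ^ (k + 1) * x ^ n (k + 1))))
    (heq1 : ∑' k : ℕ, 1 / (y ^ (k + 1) * x ^ n (k + 1)) = x - 1)
    (hsum2 : Summable (fun l : ℕ => 1 / (x ^ (l + 1) * y ^ nt (l + 1))))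
    (heq2 : ∑' l : ℕ, 1 / (x ^ (l + 1) * y ^ nt (l + 1)) = y - 1) :
    Summable (fun k : ℕ => (n (k + 1) : ℝ) / (y ^ (k + 1) * x ^ (n (k + 1) + 1))) ∧
    Summable (fun l : ℕ => (nt (l + 1) : ℝ) / (x ^ (l + 1) * y ^ (nt (l + 1) + 1))) ∧
    Summable (fun k : ℕ => ((k : ℝ) + 1) / (y ^ (k + 2) * x ^ n (k + 1))) ∧
    Summable (fun l : ℕ => ((l : ℝ) + 1) / (x ^ (l + 2) * y ^ nt (l + 1))) ∧
    (∑' k : ℕ, ((k : ℝ) + 1) / (y ^ (k + 2) * x ^ n (k + 1))) *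
        (∑' l : ℕ, ((l : ℝ) + 1) / (x ^ (l + 2) * y ^ nt (l + 1))) <
      (1 + ∑' k : ℕ, (n (k + 1) : ℝ) / (y ^ (k + 1) * x ^ (n (k + 1) + 1))) *
        (1 + ∑' l : ℕ, (nt (l + 1) : ℝ) / (x ^ (l + 1) * y ^ (nt (l + 1) + 1))) :=
  stmt17_general x y hx hy n nt hineq hsum1 heq1 hsum2 heq2
end

section
/- Define substitutions on binary words by $L(0)=0$, $L(1)=10$, $M(0)=01$, $M(1)=10$, $R(0)=01$, $R(1)=1$. Then for every $\sigma$ in the monoid generated by $\{L, R\}$ composed with $M$ on the right (i.e., $\sigma = \tau M$ with $\tau \in \{L,R\}^*$), there exists a finite binary word $w$ such that $\sigma(0) = 01w$ and $\sigma(1) = 10w$. -/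
def HasCommonTail (σ : Bool → List Bool) : Prop :=
  ∃ w : List Bool, σ false = [false, true] ++ w ∧ σ true = [true, false] ++ w

theorem hasCommonTail_Msub : HasCommonTail Msub := ⟨[], rfl, rfl⟩

theorem HasCommonTail.comp {g σ : Bool → List Bool} (hσ : HasCommonTail σ) (u : List Bool)
    (h01 : g false ++ g true = [false, true] ++ u)
    (h10 : g true ++ g false = [true, false] ++ u) :
    HasCommonTail (compSub g σ) := by
  obtain ⟨w, h0, h1⟩ := hσ
  refine ⟨u ++ w.flatMap g, ?_, ?_⟩
  · simp only [compSub, h0, List.flatMap_append]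
    simpa using congrArg (· ++ w.flatMap g) h01
  · simp only [compSub, h1, List.flatMap_append]
    simpa using congrArg (· ++ w.flatMap g) h10

theorem HasCommonTail.compSub_Lsub {σ : Bool → List Bool} (hσ : HasCommonTail σ) :
    HasCommonTail (compSub Lsub σ) :=
  hσ.comp (g := Lsub) [false] rfl rfl

theorem HasCommonTail.compSub_Rsub {σ : Bool → List Bool} (hσ : HasCommonTail σ) :
    HasCommonTail (compSub Rsub σ) :=
  hσ.comp (g := Rsub) [true] rfl rfl

/-- Every substitution of the form `τ M` with `τ ∈ {L,R}^*` maps `0` to `01w`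
and `1` to `10w` for a common word `w`. -/
theorem stmt18 (gs : List (Bool → List Bool)) (hg : ∀ g ∈ gs, g = Lsub ∨ g = Rsub) :
    ∃ w : List Bool,
      (gs.foldr compSub Msub) false = [false, true] ++ w ∧
      (gs.foldr compSub Msub) true = [true, false] ++ w := by
  show HasCommonTail (gs.foldr compSub Msub)
  induction gs with
  | nil => exact hasCommonTail_Msub
  | cons g gs ih =>
    have hrest := ih fun g hg' => hg g (List.mem_cons_of_mem _ hg')
    rcases hg g List.mem_cons_self with rfl | rfl
    · exact hrest.compSub_Lsub
    · exact hrest.compSub_Rsub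
end

section
/- Let $\sigma$ be a substitution on $\{0,1\}$ (acting on infinite sequences letterwise) such that $\sigma(0) = 01w$ and $\sigma(1) = 10w$ for some finite word $w$. Let $q_0, q_1 > 1$ be real numbers such that $q_1 \cdot \pi_{q_0,q_1}(\sigma(\overline{0})) = 1$ and $q_1 \le 1 + \tilde\pi_{q_0,q_1}(\overline{w01})$, where $\pi_{q_0,q_1}(i_1i_2\cdots) = \sum_k i_k/(q_{i_1}\cdots q_{i_k})$ and $\tilde\pi_{q_0,q_1}(i_1i_2\cdots) = \sum_k (1-i_k)/(q_{i_1}\cdots q_{i_k})$. Then $(q_0-1)(q_1-1) \le \frac{1}{2}$. -/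
noncomputable def tpiR (q0 q1 : ℝ) (i : ℕ → Bool) : ℝ :=
  ∑' k : ℕ, (cond (i k) 0 1 : ℝ) / ∏ j ∈ Finset.range (k + 1), (cond (i j) q1 q0)

/-- The periodic sequence obtained by repeating the finite word `l`. -/
def perSeq (l : List Bool) : ℕ → Bool := fun n => l.getD (n % l.length) false

/-! The two expansions of a sequence `i` add up to a telescoping series: with
`P k = ∏ j < k, q_{i_j}`, the `k`-th terms of `(q₁ - 1) π(i)` and `(q₀ - 1) π̃(i)` sum to
`(q_{i_k} - 1) / P (k + 1) = 1 / P k - 1 / P (k + 1)`, so `(q₁ - 1) π + (q₀ - 1) π̃ = 1`.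
Since `σ(0̄) = 01w01w…`, one has `q₀ q₁ π(σ(0̄)) = 1 + π(\overline{w01})`, so the
first hypothesis pins down `π(\overline{w01}) = q₀ - 1`; the identity then turns the second
hypothesis into `(q₁ - 1)(q₀ - 1) + (q₀ - 1)(q₁ - 1) ≤ 1`. -/

open Filter Topology Finset

lemma perSeq_add (l : List Bool) (n k : ℕ) : perSeq l (n + k) = perSeq (l.rotate k) n := by
  rcases l.length.eq_zero_or_pos with hl | hl
  · simp [perSeq, List.length_eq_zero_iff.1 hl]
  · simp only [perSeq, List.length_rotate, List.getD_eq_getElem?_getD,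
      List.getElem?_rotate (Nat.mod_lt _ hl), Nat.mod_add_mod]

lemma getD_flatten_replicate (l : List Bool) {m n : ℕ} (h : n < m * l.length) :
    (List.replicate m l).flatten.getD n false = l.getD (n % l.length) false := by
  induction m generalizing n with
  | zero => simp at h
  | succ m ih =>
    rw [List.replicate_succ, List.flatten_cons]
    rcases lt_or_ge n l.length with hn | hn
    · rw [List.getD_append _ _ _ _ hn, Nat.mod_eq_of_lt hn]
    · rw [List.getD_append_right _ _ _ _ hn, Nat.mod_eq_sub_mod hn]
      exact ih (by rw [Nat.succ_mul] at h; omega)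

lemma subSeq_const (σ : Bool → List Bool) (b : Bool) :
    subSeq σ (fun _ => b) = perSeq (σ b) := by
  funext n
  rcases (σ b).length.eq_zero_or_pos with hl | hl
  · simp [subSeq, perSeq, List.length_eq_zero_iff.1 hl]
  · simp only [subSeq, List.map_const', List.length_range]
    exact getD_flatten_replicate _ (by nlinarith)

section InversePartialProducts

variable {c : ℕ → ℝ} {m : ℝ}

lemma prod_range_pos (hm : 0 < m) (hc : ∀ j, m ≤ c j) (k : ℕ) :
    0 < ∏ j ∈ range k, c j :=
  prod_pos fun j _ => hm.trans_le (hc j)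

lemma inv_prod_range_le_inv_pow (hm : 0 < m) (hc : ∀ j, m ≤ c j) (k : ℕ) :
    (∏ j ∈ range k, c j)⁻¹ ≤ m⁻¹ ^ k := by
  rw [inv_pow]
  refine inv_anti₀ (pow_pos hm k) ?_
  simpa using prod_le_prod (s := range k) (fun _ _ => hm.le) (fun j _ => hc j)

lemma tendsto_inv_prod_range (hm : 1 < m) (hc : ∀ j, m ≤ c j) :
    Tendsto (fun k => (∏ j ∈ range k, c j)⁻¹) atTop (𝓝 0) := by
  have hm0 : 0 < m := one_pos.trans hm
  exact squeeze_zero (fun k => (inv_pos.2 (prod_range_pos hm0 hc k)).le)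
    (inv_prod_range_le_inv_pow hm0 hc)
    (tendsto_pow_atTop_nhds_zero_of_lt_one (inv_nonneg.2 hm0.le) (inv_lt_one_of_one_lt₀ hm))

lemma summable_div_prod_range_succ (hm : 1 < m) (hc : ∀ j, m ≤ c j) {a : ℕ → ℝ}
    (ha0 : ∀ k, 0 ≤ a k) (ha1 : ∀ k, a k ≤ 1) :
    Summable fun k => a k / ∏ j ∈ range (k + 1), c j := by
  have hm0 : 0 < m := one_pos.trans hm
  have hgeom : Summable fun k => m⁻¹ ^ (k + 1) :=
    (summable_nat_add_iff 1).2
      (summable_geometric_of_lt_one (inv_nonneg.2 hm0.le) (inv_lt_one_of_one_lt₀ hm))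
  refine hgeom.of_nonneg_of_le
    (fun k => div_nonneg (ha0 k) (prod_range_pos hm0 hc _).le) fun k => ?_
  calc a k / ∏ j ∈ range (k + 1), c j ≤ 1 / ∏ j ∈ range (k + 1), c j :=
        div_le_div_of_nonneg_right (ha1 k) (prod_range_pos hm0 hc _).le
    _ ≤ m⁻¹ ^ (k + 1) := by rw [one_div]; exact inv_prod_range_le_inv_pow hm0 hc _

lemma hasSum_sub_one_div_prod_range_succ (hm : 1 < m) (hc : ∀ j, m ≤ c j) :
    HasSum (fun k => (c k - 1) / ∏ j ∈ range (k + 1), c j) 1 := by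
  have hm0 : 0 < m := one_pos.trans hm
  have htelescope : ∀ k, (c k - 1) / ∏ j ∈ range (k + 1), c j =
      (∏ j ∈ range k, c j)⁻¹ - (∏ j ∈ range (k + 1), c j)⁻¹ := by
    intro k
    have hP := prod_range_pos hm0 hc k
    have hck : 0 < c k := hm0.trans_le (hc k)
    rw [prod_range_succ]
    field_simp
  have hnonneg : ∀ k, 0 ≤ (c k - 1) / ∏ j ∈ range (k + 1), c j := fun k =>
    div_nonneg (by linarith [hc k]) (prod_range_pos hm0 hc _).le
  rw [hasSum_iff_tendsto_nat_of_nonneg hnonneg]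
  simp only [htelescope, sum_range_sub', range_zero, prod_empty, inv_one]
  simpa using (tendsto_inv_prod_range hm hc).const_sub 1

end InversePartialProducts

section Expansions

variable {q0 q1 : ℝ}

lemma min_le_cond (b : Bool) : min q0 q1 ≤ cond b q1 q0 := by
  cases b <;> simp

lemma summable_cond_div_prod (h0 : 1 < q0) (h1 : 1 < q1) (i : ℕ → Bool) (x y : ℝ)
    (hx : x ∈ Set.Icc 0 1) (hy : y ∈ Set.Icc 0 1) :
    Summable fun k => cond (i k) x y / ∏ j ∈ range (k + 1), cond (i j) q1 q0 :=
  summable_div_prod_range_succ (lt_min h0 h1) (fun j => min_le_cond (i j))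
    (fun k => by cases i k <;> simp [hx.1, hy.1]) (fun k => by cases i k <;> simp [hx.2, hy.2])

lemma sub_one_mul_piR_add_sub_one_mul_tpiR (h0 : 1 < q0) (h1 : 1 < q1) (i : ℕ → Bool) :
    (q1 - 1) * piR q0 q1 i + (q0 - 1) * tpiR q0 q1 i = 1 := by
  have hunit : (1 : ℝ) ∈ Set.Icc 0 1 := Set.right_mem_Icc.2 zero_le_one
  have hzero : (0 : ℝ) ∈ Set.Icc 0 1 := Set.left_mem_Icc.2 zero_le_one
  calc (q1 - 1) * piR q0 q1 i + (q0 - 1) * tpiR q0 q1 i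
      = ∑' k, (cond (i k) q1 q0 - 1) / ∏ j ∈ range (k + 1), cond (i j) q1 q0 := by
        rw [piR, tpiR, ← tsum_mul_left, ← tsum_mul_left,
          ← ((summable_cond_div_prod h0 h1 i 1 0 hunit hzero).mul_left _).tsum_add
            ((summable_cond_div_prod h0 h1 i 0 1 hzero hunit).mul_left _)]
        exact tsum_congr fun k => by cases i k <;> simp [div_eq_mul_inv]
    _ = 1 := (hasSum_sub_one_div_prod_range_succ (lt_min h0 h1) fun j => min_le_cond (i j)).tsum_eq

lemma piR_eq_add_piR_shift_div (h0 : 1 < q0) (h1 : 1 < q1) (s : ℕ → Bool) :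
    piR q0 q1 s = (cond (s 0) 1 0 + piR q0 q1 (fun n => s (n + 1))) / cond (s 0) q1 q0 := by
  have hunit : (1 : ℝ) ∈ Set.Icc 0 1 := Set.right_mem_Icc.2 zero_le_one
  have hzero : (0 : ℝ) ∈ Set.Icc 0 1 := Set.left_mem_Icc.2 zero_le_one
  rw [piR, piR, (summable_cond_div_prod h0 h1 s 1 0 hunit hzero).tsum_eq_zero_add, add_div,
    ← tsum_div_const]
  congr 1
  · simp
  · exact tsum_congr fun k => by rw [prod_range_succ' _ (k + 1), div_mul_eq_div_div]

lemma piR_perSeq_cons (h0 : 1 < q0) (h1 : 1 < q1) (a : Bool) (l : List Bool) :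
    piR q0 q1 (perSeq (a :: l)) =
      (cond a 1 0 + piR q0 q1 (perSeq (l ++ [a]))) / cond a q1 q0 := by
  have hshift : (fun n => perSeq (a :: l) (n + 1)) = perSeq (l ++ [a]) := by
    funext n
    rw [perSeq_add, List.rotate_cons_succ, List.rotate_zero]
  rw [piR_eq_add_piR_shift_div h0 h1, hshift]
  simp [perSeq]

end Expansions

theorem stmt19_general (σ : Bool → List Bool) (w : List Bool)
    (hσ0 : σ false = [false, true] ++ w)
    (q0 q1 : ℝ) (h0 : 1 < q0) (h1 : 1 < q1)
    (heq : q1 * piR q0 q1 (subSeq σ (fun _ => false)) = 1)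
    (hle : q1 ≤ 1 + tpiR q0 q1 (perSeq (w ++ [false, true]))) :
    (q0 - 1) * (q1 - 1) ≤ 1 / 2 := by
  have hpi : piR q0 q1 (perSeq (w ++ [false, true])) = q0 - 1 := by
    rw [subSeq_const, hσ0, List.cons_append, List.cons_append, List.nil_append,
      piR_perSeq_cons h0 h1, List.cons_append, piR_perSeq_cons h0 h1, List.append_assoc] at heq
    simp only [cond_false, cond_true, zero_add, List.singleton_append] at heq
    field_simp at heq
    linarith
  have hid := sub_one_mul_piR_add_sub_one_mul_tpiR h0 h1 (perSeq (w ++ [false, true]))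
  have htpi : (q0 - 1) * (q1 - 1) ≤ (q0 - 1) * tpiR q0 q1 (perSeq (w ++ [false, true])) :=
    mul_le_mul_of_nonneg_left (by linarith) (by linarith)
  rw [hpi] at hid
  linarith

theorem stmt19 (σ : Bool → List Bool) (w : List Bool)
    (hσ0 : σ false = [false, true] ++ w) (hσ1 : σ true = [true, false] ++ w)
    (q0 q1 : ℝ) (h0 : 1 < q0) (h1 : 1 < q1)
    (heq : q1 * piR q0 q1 (subSeq σ (fun _ => false)) = 1)
    (hle : q1 ≤ 1 + tpiR q0 q1 (perSeq (w ++ [false, true]))) :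
    (q0 - 1) * (q1 - 1) ≤ 1 / 2 :=
  stmt19_general σ w hσ0 q0 q1 h0 h1 heq hle
end
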